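/- arXiv:1611.09821 — 6 statements merged into one kernel-verified Lean document; each statement's English description precedes it below -/
import Mathlib

section
/- Let n ≥ 1 and 1 ≤ k ≤ n. If (π₂, …, πₙ) ∈ Sh(k−1, n−k), then (k, π₂, …, πₙ) is a parking function of size n. -/
/-- A parking function of size `n`, encoded as a list of length `n` with entries in
`{1, …, n}` such that for each `1 ≤ i ≤ n` at least `i` entries are `≤ i`. -/
def IsPFList (n : ℕ) (l : List ℕ) : Prop :=
  l.length = n ∧ (∀ x ∈ l, 1 ≤ x ∧ x ≤ n) ∧
  ∀ i : ℕ, 1 ≤ i → i ≤ n → i ≤ (l.filter (fun x => x ≤ i)).length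

/-- `Interleave a b c` : `c` is a shuffle (order-preserving interleaving) of `a` and `b`. -/
inductive Interleave : List ℕ → List ℕ → List ℕ → Prop
  | nil : Interleave [] [] []
  | left {x : ℕ} {a b c : List ℕ} : Interleave a b c → Interleave (x :: a) b (x :: c)
  | right {x : ℕ} {a b c : List ℕ} : Interleave a b c → Interleave a (x :: b) (x :: c)

/-- `w ∈ Sh(k-1, n-k)`: `w` is a shuffle of a parking function `α` of size `k-1` with a
parking function `β` of size `n-k` whose entries are each increased by `k-1`. -/
def InSh (n k : ℕ) (w : List ℕ) : Prop :=
  ∃ α β : List ℕ, IsPFList (k - 1) α ∧ IsPFList (n - k) β ∧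
    Interleave α (β.map (fun x => x + (k - 1))) w

/-! A shuffle is a permutation of the concatenation, so entries `≤ i` of `(k, π₂, …, πₙ)` are
counted separately in `k`, `α` and the shifted `β`; a parking function of size `m` has at least
`min i m` entries `≤ i`. For `i < k` the entries of `α` already suffice; for `i ≥ k` all of `α`
and `k` itself count, together with `min (i - k + 1) (n - k)` entries of the shifted `β`. -/

theorem Interleave.perm {a b c : List ℕ} (h : Interleave a b c) : c.Perm (a ++ b) := by
  induction h with
  | nil => rfl
  | left _ ih => exact ih.cons _
  | right _ ih => exact (ih.cons _).trans List.perm_middle.symm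

namespace IsPFList

variable {m : ℕ} {l : List ℕ}

theorem min_le_length_filter (hl : IsPFList m l) (i : ℕ) :
    min i m ≤ (l.filter (· ≤ i)).length := by
  obtain ⟨hlen, hbound, hcount⟩ := hl
  rcases le_total i m with him | hmi
  · rcases Nat.eq_zero_or_pos i with rfl | hi
    · simp
    · simpa [him] using hcount i hi him
  · have hall : l.filter (· ≤ i) = l :=
      List.filter_eq_self.2 fun x hx => by simpa using (hbound x hx).2.trans hmi
    simp [hall, hlen, hmi]

theorem min_sub_le_length_filter_map_add (hl : IsPFList m l) (c i : ℕ) :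
    min (i - c) m ≤ ((l.map (· + c)).filter (· ≤ i)).length := by
  rcases le_or_gt c i with hci | hic
  · have hshift : (fun y => decide (y + c ≤ i)) = fun y => decide (y ≤ i - c) := by
      funext y; simp [Nat.le_sub_iff_add_le hci]
    rw [← List.countP_eq_length_filter, List.countP_map, Function.comp_def, hshift,
      List.countP_eq_length_filter]
    exact hl.min_le_length_filter (i - c)
  · simp [Nat.sub_eq_zero_of_le hic.le]

end IsPFList

theorem stmt1_general (n k : ℕ) (hk : 1 ≤ k) (hkn : k ≤ n)
    (w : List ℕ) (hsh : InSh n k w) :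
    IsPFList n (k :: w) := by
  obtain ⟨α, β, hα, hβ, hw⟩ := hsh
  have hperm := hw.perm
  refine ⟨?_, fun x hx => ?_, fun i _ hin => ?_⟩
  · simp only [List.length_cons, hperm.length_eq, List.length_append, List.length_map, hα.1, hβ.1]
    omega
  · rcases List.mem_cons.1 hx with rfl | hx
    · exact ⟨hk, hkn⟩
    rcases List.mem_append.1 (hperm.mem_iff.1 hx) with hxα | hxβ
    · have := hα.2.1 x hxα
      omega
    · obtain ⟨y, hy, rfl⟩ := List.mem_map.1 hxβ
      have := hβ.2.1 y hy
      omega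
  · have hsplit : (w.filter (· ≤ i)).length =
        (α.filter (· ≤ i)).length + ((β.map (· + (k - 1))).filter (· ≤ i)).length := by
      rw [(hperm.filter _).length_eq, List.filter_append, List.length_append]
    have hα_count := hα.min_le_length_filter i
    have hβ_count := hβ.min_sub_le_length_filter_map_add (k - 1) i
    by_cases hki : k ≤ i
    · simp only [List.filter_cons, hki, decide_true, if_true, List.length_cons]
      omega
    · simp only [List.filter_cons, hki, decide_false, Bool.false_eq_true, if_false]
      omega

theorem stmt1 (n k : ℕ) (hn : 1 ≤ n) (hk : 1 ≤ k) (hkn : k ≤ n)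
    (w : List ℕ) (hsh : InSh n k w) :
    IsPFList n (k :: w) :=
  stmt1_general n k hk hkn w hsh
end

section
/- For every n ≥ 1 and every 1 ≤ k ≤ n, the number of parking functions π of size n with first coordinate π₁ = k equals ∑_{s=0}^{n−k} C(n−1, s) · (s+1)^{s−1} · (n−s)^{n−s−2}, where C(a,b) denotes the binomial coefficient. In particular this count is weakly decreasing in k. -/
/-!
Write `c_k` for the number of parking functions of size `n` with first entry `k` and count them by
their tails. Raising the first entry from `k` to `k + 1` preserves the parking property unless the
tail has exactly `k - 1` entries `≤ k`. Such a function splits into a parking function of size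
`k - 1` (the tail entries `≤ k`, on one of `C(n - 1, k - 1)` index sets) and one of size `n - k`
(the other entries, lowered by `k`). With Pollak's count `|PF_m| = (m + 1) ^ (m - 1)` this gives
`c_k = c_(k+1) + C(n - 1, k - 1) k ^ (k - 2) (n + 1 - k) ^ (n - 1 - k)` and `c_n = |PF_(n-1)|`,
which telescopes to the claimed sum of nonnegative terms.

Pollak's count is the cycle lemma: for `g : ι → ZMod (m + 1)` with `|ι| = m` there is exactly one
`a` for which `j ↦ (g j - a).val` is a parking function (the spot `a` is the one left empty when
the cars park around the circle), so `(a, f) ↦ f + a` is a bijection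
`ZMod (m + 1) × PF_m → (ι → ZMod (m + 1))`.
-/

open Finset

theorem ZMod.val_add_eq_or {n : ℕ} (x y : ZMod (n + 1)) :
    (x + y).val = x.val + y.val ∨ (x + y).val + (n + 1) = x.val + y.val := by
  rcases lt_or_ge (x.val + y.val) (n + 1) with h | h
  · exact .inl (ZMod.val_add_of_lt h)
  · exact .inr (ZMod.val_add_val_of_le h).symm

theorem Nat.exists_first_minimizer {α : Type*} [LinearOrder α] (D : ℕ → α) (n : ℕ) :
    ∃ u ≤ n, (∀ t ≤ n, D u ≤ D t) ∧ ∀ t < u, D u < D t := by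
  have hex : ∃ u, u ≤ n ∧ ∀ t ≤ n, D u ≤ D t := by
    obtain ⟨u, hu, hmin⟩ := (Iic n).exists_min_image D ⟨0, mem_Iic.2 n.zero_le⟩
    exact ⟨u, mem_Iic.1 hu, fun t ht => hmin t (mem_Iic.2 ht)⟩
  refine ⟨Nat.find hex, (Nat.find_spec hex).1, (Nat.find_spec hex).2, fun t ht => ?_⟩
  by_contra! h
  exact Nat.find_min hex ht ⟨by have := (Nat.find_spec hex).1; omega,
    fun s hs => h.trans ((Nat.find_spec hex).2 s hs)⟩

theorem card_filter_lt_eq_add {α : Type*} [Fintype α] (v : α → ℕ) {s t : ℕ} (hst : s ≤ t) :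
    #{j | v j < t} = #{j | v j < s} + #{j | s ≤ v j ∧ v j < t} := by
  rw [← card_filter_add_card_filter_not (s := filter (fun j => v j < t) univ) (v · < s),
    filter_filter, filter_filter]
  congr 2 <;> ext j <;> simp only [mem_filter, mem_univ, true_and] <;> omega

theorem card_filter_coe {α : Type*} {S : Finset α} {p : α → Prop}
    [DecidablePred p] : #{x : S | p x} = #{x ∈ S | p x} := by
  rw [← card_map (Function.Embedding.subtype _)]
  congr 1
  ext
  simp [and_comm]

theorem card_filter_le_eq_card_filter_coe_of_le {α : Type*} [Fintype α] {g : α → ℕ}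
    {S : Finset α} {k i : ℕ} (hg : ∀ j, j ∈ S ↔ g j ≤ k) (hi : i ≤ k) :
    #{j | g j ≤ i} = #{j : S | g j ≤ i} := by
  rw [card_filter_coe (p := (g · ≤ i))]
  congr 1
  ext j
  simp only [mem_filter, mem_univ, true_and, iff_and_self]
  exact fun hj => (hg j).2 (hj.trans hi)

theorem card_filter_le_add_eq_card_add {α : Type*} [Fintype α] [DecidableEq α] {g : α → ℕ}
    {S : Finset α} {k : ℕ} (hg : ∀ j, j ∈ S ↔ g j ≤ k) (i : ℕ) :
    #{j | g j ≤ i + k} = #S + #{j : ↥Sᶜ | g j - k ≤ i} := by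
  rw [card_filter_coe (p := (g · - k ≤ i)),
    ← card_filter_add_card_filter_not (s := filter (g · ≤ i + k) univ) (· ∈ S),
    filter_filter, filter_filter]
  congr 2 <;> ext j <;> simp only [mem_filter, mem_univ, true_and, mem_compl] <;> grind

section ParkingFunction

variable {ι : Type*} [Fintype ι]

/-- The bound `f j ≤ card ι` of the usual definition is the case `i = card ι` of the count. -/
def IsParkingFunction (f : ι → ℕ) : Prop :=
  (∀ j, 0 < f j) ∧ ∀ i ≤ Fintype.card ι, i ≤ #{j | f j ≤ i}

theorem IsParkingFunction.le_card {f : ι → ℕ} (hf : IsParkingFunction f) (j : ι) :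
    f j ≤ Fintype.card ι :=
  card_filter_eq_iff.1 (le_antisymm (card_filter_le _ _) (hf.2 _ le_rfl)) j (mem_univ j)

theorem isParkingFunction_iff_le_card_filter_pos {f : ι → ℕ} :
    IsParkingFunction f ↔ ∀ i ≤ Fintype.card ι, i ≤ #{j | 0 < f j ∧ f j ≤ i} := by
  refine ⟨fun hf i hi => ?_, fun h => ⟨fun j => ?_, fun i hi => (h i hi).trans ?_⟩⟩
  · rw [filter_congr fun j _ => and_iff_right (hf.1 j)]
    exact hf.2 i hi
  · exact (card_filter_eq_iff.1 (le_antisymm (card_filter_le _ _) (h _ le_rfl)) j (mem_univ j)).1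
  · exact card_le_card fun j => by simp only [mem_filter]; tauto

theorem IsParkingFunction.eq_of_val_sub {g : ι → ZMod (Fintype.card ι + 1)}
    {a b : ZMod (Fintype.card ι + 1)} (ha : IsParkingFunction fun j => (g j - a).val)
    (hb : IsParkingFunction fun j => (g j - b).val) : a = b := by
  -- Reading from `b` is reading from `a` rotated by `d`: the cars at most `d` past `a` and those
  -- at most `card ι + 1 - d` past `b` partition all `card ι` cars, while the parking conditions
  -- at `d` and at `card ι + 1 - d` ask for `card ι + 1` cars in total.
  by_contra hab
  set d := (b - a).val
  have hd0 : 0 < d := ZMod.val_pos.2 (sub_ne_zero.2 (Ne.symm hab))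
  have hdm : d < Fintype.card ι + 1 := ZMod.val_lt _
  have key : ∀ j, (g j - b).val ≤ Fintype.card ι + 1 - d ↔ d < (g j - a).val := by
    intro j
    have h := ZMod.val_add_eq_or (g j - b) (b - a)
    rw [sub_add_sub_cancel] at h
    have : 0 < (g j - a).val := ha.1 j
    have : 0 < (g j - b).val := hb.1 j
    have := ZMod.val_lt (g j - b)
    have := ZMod.val_lt (g j - a)
    omega
  have ha' : d ≤ #{j | (g j - a).val ≤ d} := ha.2 d (by omega)
  have hb' : Fintype.card ι + 1 - d ≤ #{j | (g j - b).val ≤ Fintype.card ι + 1 - d} :=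
    hb.2 _ (by omega)
  rw [filter_congr fun j _ => key j] at hb'
  have hsplit := card_filter_add_card_filter_not (s := univ) (fun j => (g j - a).val ≤ d)
  simp only [not_le, card_univ] at hsplit
  omega

theorem isParkingFunction_val_sub_of_first_minimizer (g : ι → ZMod (Fintype.card ι + 1)) {u : ℕ}
    (hu0 : 0 < u) (hum : u ≤ Fintype.card ι + 1)
    (hmin : ∀ t ≤ Fintype.card ι + 1,
      (#{j | (g j).val < u} : ℤ) - u ≤ (#{j | (g j).val < t} : ℤ) - t)
    (hfirst : ∀ t < u, (#{j | (g j).val < u} : ℤ) - u < (#{j | (g j).val < t} : ℤ) - t) :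
    IsParkingFunction fun j => (g j - ((u - 1 : ℕ) : ZMod (Fintype.card ι + 1))).val := by
  set a : ZMod (Fintype.card ι + 1) := ((u - 1 : ℕ) : ZMod (Fintype.card ι + 1)) with ha
  have hrel : ∀ j, (g j).val = (g j - a).val + (u - 1) ∨
      (g j).val + (Fintype.card ι + 1) = (g j - a).val + (u - 1) := by
    intro j
    have := ZMod.val_add_eq_or (g j - a) a
    rwa [sub_add_cancel, ha, ZMod.val_cast_of_lt (by omega)] at this
  refine isParkingFunction_iff_le_card_filter_pos.2 fun i hi => ?_
  rcases le_or_gt (u + i) (Fintype.card ι + 1) with hwrap | hwrap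
  · have hsub : #{j | u ≤ (g j).val ∧ (g j).val < u + i} ≤
        #{j | 0 < (g j - a).val ∧ (g j - a).val ≤ i} := by
      refine card_le_card fun j => ?_
      have := hrel j
      have := ZMod.val_lt (g j - a)
      simp only [mem_filter, mem_univ, true_and]
      omega
    have h1 := card_filter_lt_eq_add (fun j => (g j).val) (show u ≤ u + i by omega)
    have h2 := hmin (u + i) hwrap
    push_cast at h2
    omega
  · have hsub : #{j | ¬ (u + i - (Fintype.card ι + 1) ≤ (g j).val ∧ (g j).val < u)} ≤
        #{j | 0 < (g j - a).val ∧ (g j - a).val ≤ i} := by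
      refine card_le_card fun j => ?_
      have := hrel j
      have := ZMod.val_lt (g j - a)
      have := ZMod.val_lt (g j)
      simp only [mem_filter, mem_univ, true_and]
      omega
    have h1 := card_filter_lt_eq_add (fun j => (g j).val)
      (show u + i - (Fintype.card ι + 1) ≤ u by omega)
    have h2 := hfirst (u + i - (Fintype.card ι + 1)) (by omega)
    have h3 := card_filter_add_card_filter_not (s := univ)
      (fun j => u + i - (Fintype.card ι + 1) ≤ (g j).val ∧ (g j).val < u)
    rw [card_univ] at h3
    push_cast [Nat.cast_sub hwrap.le] at h2
    omega

theorem exists_isParkingFunction_val_sub (g : ι → ZMod (Fintype.card ι + 1)) :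
    ∃ a, IsParkingFunction fun j => (g j - a).val := by
  -- The empty spot is `u - 1`, where `u` is the first minimum of the excess
  -- `#{j | (g j).val < t} - t` over `t ≤ card ι + 1`.
  obtain ⟨u, hum, hmin, hfirst⟩ := Nat.exists_first_minimizer
    (fun t => (#{j | (g j).val < t} : ℤ) - t) (Fintype.card ι + 1)
  have hu0 : 0 < u := by
    by_contra! h
    have := hmin _ le_rfl
    rw [Nat.le_zero.1 h, filter_true_of_mem fun j _ => ZMod.val_lt (g j), card_univ] at this
    simp at this
  exact ⟨_, isParkingFunction_val_sub_of_first_minimizer g hu0 hum hmin hfirst⟩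

theorem card_isParkingFunction :
    Nat.card {f : ι → ℕ // IsParkingFunction f} =
      (Fintype.card ι + 1) ^ (Fintype.card ι - 1) := by
  have hread : ∀ (c : ZMod (Fintype.card ι + 1)) {f : ι → ℕ}, IsParkingFunction f →
      ∀ j, ((f j : ZMod (Fintype.card ι + 1)) + c - c).val = f j := fun c f hf j => by
    rw [add_sub_cancel_right, ZMod.val_cast_of_lt (Nat.lt_succ_of_le (hf.le_card j))]
  have hbij : Function.Bijective
      fun p : ZMod (Fintype.card ι + 1) × {f : ι → ℕ // IsParkingFunction f} =>
        fun j => (p.2.1 j : ZMod (Fintype.card ι + 1)) + p.1 := by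
    refine ⟨fun ⟨a, f⟩ ⟨b, f'⟩ h => ?_, fun g => ?_⟩
    · have h' : ∀ j, (f.1 j : ZMod (Fintype.card ι + 1)) + a = f'.1 j + b := congrFun h
      obtain rfl : a = b := IsParkingFunction.eq_of_val_sub
        (g := fun j => (f'.1 j : ZMod (Fintype.card ι + 1)) + b)
        (by simpa only [← h', hread a f.2] using f.2) (by simpa only [hread b f'.2] using f'.2)
      have hff' : f = f' := Subtype.ext <| funext fun j => by
        rw [← hread a f.2 j, h' j, hread a f'.2 j]
      rw [hff']
    · obtain ⟨a, ha⟩ := exists_isParkingFunction_val_sub g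
      exact ⟨(a, ⟨_, ha⟩), funext fun j => by simp⟩
  have hcard := Nat.card_eq_of_bijective _ hbij
  rw [Nat.card_prod, Nat.card_zmod, Nat.card_fun, Nat.card_zmod,
    Nat.card_eq_fintype_card (α := ι)] at hcard
  apply Nat.eq_of_mul_eq_mul_left (Fintype.card ι).succ_pos
  rw [hcard]
  rcases Nat.eq_zero_or_pos (Fintype.card ι) with hm | hm
  · simp [hm]
  · rw [← pow_succ', Nat.sub_add_cancel hm]

instance : Finite {f : ι → ℕ // IsParkingFunction f} :=
  Nat.finite_of_card_ne_zero (by rw [card_isParkingFunction]; positivity)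

end ParkingFunction

section FirstEntry

variable {m : ℕ}

theorem isParkingFunction_cons_iff {a : ℕ} {g : Fin m → ℕ} :
    IsParkingFunction (Fin.cons a g : Fin (m + 1) → ℕ) ↔
      0 < a ∧ (∀ j, 0 < g j) ∧ ∀ i ≤ m + 1, i ≤ (if a ≤ i then 1 else 0) + #{j | g j ≤ i} := by
  simp only [IsParkingFunction, Fin.forall_fin_succ, Fin.cons_zero, Fin.cons_succ,
    Fintype.card_fin, card_filter, Fin.sum_univ_succ, and_assoc]

theorem isParkingFunction_cons_succ_self_iff {g : Fin m → ℕ} :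
    IsParkingFunction (Fin.cons (m + 1) g : Fin (m + 1) → ℕ) ↔ IsParkingFunction g := by
  rw [isParkingFunction_cons_iff]
  refine ⟨fun ⟨_, hpos, hcnt⟩ => ⟨hpos, fun i hi => ?_⟩,
    fun hg => ⟨m.succ_pos, hg.1, fun i hi => ?_⟩⟩
  · rw [Fintype.card_fin] at hi
    simpa [if_neg (show ¬ m < i by omega)] using hcnt i (by omega)
  · rcases hi.lt_or_eq with hi | rfl
    · rw [if_neg (by omega), zero_add]
      exact hg.2 i (by rw [Fintype.card_fin]; omega)
    · have hall : #{j | g j ≤ m + 1} = m := by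
        rw [filter_true_of_mem fun j _ => (hg.le_card j).trans (by simp), card_univ,
          Fintype.card_fin]
      simp [hall]

theorem isParkingFunction_cons_succ_iff {k : ℕ} (hk : 0 < k) (hkm : k ≤ m + 1) {g : Fin m → ℕ} :
    IsParkingFunction (Fin.cons (k + 1) g : Fin (m + 1) → ℕ) ↔
      IsParkingFunction (Fin.cons k g : Fin (m + 1) → ℕ) ∧ k ≤ #{j | g j ≤ k} := by
  simp only [isParkingFunction_cons_iff]
  constructor
  · rintro ⟨-, hpos, hcnt⟩
    refine ⟨⟨hk, hpos, fun i hi => ?_⟩, by simpa using hcnt k hkm⟩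
    have := hcnt i hi
    split_ifs at * <;> omega
  · rintro ⟨⟨-, hpos, hcnt⟩, hkk⟩
    refine ⟨k.succ_pos, hpos, fun i hi => ?_⟩
    have := hcnt i hi
    rcases eq_or_ne i k with rfl | hik
    · simpa using hkk
    · split_ifs at * <;> omega

/-- A breakpoint at `k`: besides the first entry `k`, exactly the entries indexed by `S` are
`≤ k`. -/
theorem isParkingFunction_cons_iff_of_breakpoint {k : ℕ} {g : Fin m → ℕ} {S : Finset (Fin m)}
    (hS : #S + 1 = k) (hg : ∀ j, j ∈ S ↔ g j ≤ k) :
    IsParkingFunction (Fin.cons k g : Fin (m + 1) → ℕ) ↔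
      IsParkingFunction (fun j : S => g j) ∧ IsParkingFunction (fun j : ↥Sᶜ => g j - k) := by
  have hSm : #S ≤ m := by simpa using card_le_univ S
  have hcardc : Fintype.card ↥Sᶜ = m + 1 - k := by
    rw [Fintype.card_coe, card_compl, Fintype.card_fin]
    omega
  have hpos : ∀ j : ↥Sᶜ, k < g j := fun j => not_le.1 ((hg j).not.1 (mem_compl.1 j.2))
  rw [isParkingFunction_cons_iff]
  simp only [IsParkingFunction, Fintype.card_coe, hcardc]
  constructor
  · rintro ⟨-, hposg, hcnt⟩
    refine ⟨⟨fun j => hposg j, fun i hi => ?_⟩, fun j => Nat.sub_pos_of_lt (hpos j),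
      fun i hi => ?_⟩
    · have := hcnt i (by omega)
      rwa [if_neg (by omega), zero_add, card_filter_le_eq_card_filter_coe_of_le hg (by omega)]
        at this
    · have := hcnt (i + k) (by omega)
      rw [if_pos (by omega), card_filter_le_add_eq_card_add hg] at this
      omega
  · rintro ⟨⟨hposS, hcntS⟩, -, hcntSc⟩
    refine ⟨by omega, fun j => ?_, fun i hi => ?_⟩
    · by_cases hj : j ∈ S
      · exact hposS ⟨j, hj⟩
      · exact (Nat.zero_le k).trans_lt (hpos ⟨j, mem_compl.2 hj⟩)
    · rcases lt_or_ge i k with hik | hik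
      · rw [if_neg (by omega), card_filter_le_eq_card_filter_coe_of_le hg hik.le]
        exact (hcntS i (by omega)).trans (by omega)
      · have := hcntSc (i - k) (by omega)
        rw [if_pos hik, ← Nat.sub_add_cancel hik, card_filter_le_add_eq_card_add hg]
        omega

end FirstEntry

section Counting

variable {m k : ℕ}

def breakpointSplitEquiv (S : Finset (Fin m)) (hS : #S + 1 = k) :
    {g : Fin m → ℕ //
        IsParkingFunction (Fin.cons k g : Fin (m + 1) → ℕ) ∧ ∀ j, j ∈ S ↔ g j ≤ k} ≃
      {u : S → ℕ // IsParkingFunction u} × {v : ↥Sᶜ → ℕ // IsParkingFunction v} where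
  toFun g :=
    have h := (isParkingFunction_cons_iff_of_breakpoint hS g.2.2).1 g.2.1
    (⟨_, h.1⟩, ⟨_, h.2⟩)
  invFun p := ⟨fun j => if h : j ∈ S then p.1.1 ⟨j, h⟩ else p.2.1 ⟨j, mem_compl.2 h⟩ + k, by
    have hg : ∀ j, j ∈ S ↔
        (if h : j ∈ S then p.1.1 ⟨j, h⟩ else p.2.1 ⟨j, mem_compl.2 h⟩ + k) ≤ k := by
      intro j
      by_cases h : j ∈ S
      · have := p.1.2.le_card ⟨j, h⟩
        simp only [Fintype.card_coe] at this
        simp only [h, dite_true, true_iff]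
        omega
      · have := p.2.2.1 ⟨j, mem_compl.2 h⟩
        simp only [h, dite_false, false_iff]
        omega
    refine ⟨(isParkingFunction_cons_iff_of_breakpoint hS hg).2 ⟨?_, ?_⟩, hg⟩
    · convert p.1.2 using 2 with j
      simp [j.2]
    · convert p.2.2 using 2 with j
      simp [mem_compl.1 j.2]⟩
  left_inv g := by
    ext j
    by_cases h : j ∈ S
    · simp [h]
    · have := (g.2.2 j).not.1 h
      simp only [h, dite_false]
      omega
  right_inv p := by
    ext j
    · simp [j.2]
    · simp [mem_compl.1 j.2]

def breakpointSigmaEquiv (hk : 0 < k) (hkm : k ≤ m + 1) :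
    {g : Fin m → ℕ //
        IsParkingFunction (Fin.cons k g : Fin (m + 1) → ℕ) ∧ #{j | g j ≤ k} < k} ≃
      Σ S : powersetCard (k - 1) (univ : Finset (Fin m)), {g : Fin m → ℕ //
        IsParkingFunction (Fin.cons k g : Fin (m + 1) → ℕ) ∧ ∀ j, j ∈ S.1 ↔ g j ≤ k} where
  toFun g := ⟨⟨({j | g.1 j ≤ k} : Finset (Fin m)), mem_powersetCard_univ.2 (by
      have := (isParkingFunction_cons_iff.1 g.2.1).2.2 k hkm
      rw [if_pos le_rfl] at this
      have := g.2.2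
      omega)⟩, ⟨g.1, g.2.1, fun j => by simp⟩⟩
  invFun x := ⟨x.2.1, x.2.2.1, by
    have hS : ({j | x.2.1 j ≤ k} : Finset (Fin m)) = x.1.1 :=
      Finset.ext fun j => by simp [x.2.2.2 j]
    rw [hS, (mem_powersetCard_univ.1 x.1.2)]
    omega⟩
  left_inv g := rfl
  right_inv x := Sigma.subtype_ext (Subtype.ext (Finset.ext fun j => by simp [x.2.2.2 j])) rfl

theorem ncard_cons_breakpoint (hk : 0 < k) (hkm : k ≤ m + 1) :
    {g : Fin m → ℕ |
        IsParkingFunction (Fin.cons k g : Fin (m + 1) → ℕ) ∧ #{j | g j ≤ k} < k}.ncard =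
      m.choose (k - 1) * (k ^ (k - 2) * (m + 2 - k) ^ (m - k)) := by
  have hS : ∀ S : powersetCard (k - 1) (univ : Finset (Fin m)), #S.1 + 1 = k := fun S => by
    rw [mem_powersetCard_univ.1 S.2]
    omega
  have hfiber : ∀ S : powersetCard (k - 1) (univ : Finset (Fin m)),
      Nat.card {g : Fin m → ℕ // IsParkingFunction (Fin.cons k g : Fin (m + 1) → ℕ) ∧
        ∀ j, j ∈ S.1 ↔ g j ≤ k} = k ^ (k - 2) * (m + 2 - k) ^ (m - k) := fun S => by
    rw [Nat.card_congr (breakpointSplitEquiv S.1 (hS S)), Nat.card_prod, card_isParkingFunction,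
      card_isParkingFunction, Fintype.card_coe, Fintype.card_coe, card_compl, Fintype.card_fin,
      mem_powersetCard_univ.1 S.2]
    congr 2 <;> omega
  have : ∀ S : powersetCard (k - 1) (univ : Finset (Fin m)), Finite {g : Fin m → ℕ //
      IsParkingFunction (Fin.cons k g : Fin (m + 1) → ℕ) ∧ ∀ j, j ∈ S.1 ↔ g j ≤ k} :=
    fun S => Finite.of_equiv _ (breakpointSplitEquiv S.1 (hS S)).symm
  rw [← Nat.card_coe_set_eq]
  refine (Nat.card_congr (breakpointSigmaEquiv hk hkm)).trans ?_
  rw [Nat.card_sigma, sum_congr rfl fun S _ => hfiber S, sum_const, card_univ, Fintype.card_coe,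
    card_powersetCard, card_univ, Fintype.card_fin, smul_eq_mul]

theorem finite_setOf_isParkingFunction_cons (a : ℕ) :
    {g : Fin m → ℕ | IsParkingFunction (Fin.cons a g : Fin (m + 1) → ℕ)}.Finite := by
  have hfin : {f : Fin (m + 1) → ℕ | IsParkingFunction f}.Finite :=
    Set.finite_coe_iff.1 (inferInstanceAs (Finite {f : Fin (m + 1) → ℕ // IsParkingFunction f}))
  exact hfin.preimage (Fin.cons_right_injective (α := fun _ => ℕ) a).injOn

theorem ncard_cons_eq_ncard_cons_succ_add (hk : 0 < k) (hkm : k ≤ m + 1) :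
    {g : Fin m → ℕ | IsParkingFunction (Fin.cons k g : Fin (m + 1) → ℕ)}.ncard =
      {g : Fin m → ℕ | IsParkingFunction (Fin.cons (k + 1) g : Fin (m + 1) → ℕ)}.ncard +
      {g : Fin m → ℕ |
        IsParkingFunction (Fin.cons k g : Fin (m + 1) → ℕ) ∧ #{j | g j ≤ k} < k}.ncard := by
  rw [← Set.ncard_inter_add_ncard_sdiff_eq_ncard _ {g : Fin m → ℕ | k ≤ #{j | g j ≤ k}}
    (finite_setOf_isParkingFunction_cons k)]
  congr 2 <;> ext g <;> simp [isParkingFunction_cons_succ_iff hk hkm]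

theorem ncard_cons_eq_sum (hk : 0 < k) (hkm : k ≤ m + 1) :
    {g : Fin m → ℕ | IsParkingFunction (Fin.cons k g : Fin (m + 1) → ℕ)}.ncard =
      ∑ s ∈ range (m + 1 - k + 1),
        m.choose s * (s + 1) ^ (s - 1) * (m + 1 - s) ^ (m + 1 - s - 2) := by
  induction hd : m + 1 - k generalizing k with
  | zero =>
    obtain rfl : k = m + 1 := by omega
    simp only [isParkingFunction_cons_succ_self_iff]
    rw [← Nat.card_coe_set_eq]
    refine card_isParkingFunction.trans ?_
    simp
  | succ d ih =>
    rw [ncard_cons_eq_ncard_cons_succ_add hk hkm, ih k.succ_pos (by omega) (by omega),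
      ncard_cons_breakpoint hk hkm, sum_range_succ _ (d + 1)]
    congr 1
    rw [← Nat.choose_symm (by omega : k - 1 ≤ m), show m - (k - 1) = d + 1 by omega,
      show d + 1 + 1 = m + 2 - k by omega, show d + 1 - 1 = m - k by omega,
      show m + 1 - (d + 1) = k by omega]
    ring

end Counting

theorem length_filter_ofFn_le {n : ℕ} (f : Fin n → ℕ) (i : ℕ) :
    ((List.ofFn f).filter (fun x => x ≤ i)).length = #{j | f j ≤ i} := by
  rw [List.ofFn_eq_map, List.filter_map, List.length_map, Fin.univ_def]
  rfl

theorem isPFList_ofFn_iff {n : ℕ} (f : Fin n → ℕ) :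
    IsPFList n (List.ofFn f) ↔ IsParkingFunction f := by
  simp only [IsPFList, List.length_ofFn, List.forall_mem_ofFn_iff, length_filter_ofFn_le,
    true_and]
  constructor
  · rintro ⟨hval, hcnt⟩
    refine ⟨fun j => (hval j).1, fun i hi => ?_⟩
    rcases i.eq_zero_or_pos with rfl | hi0
    · exact Nat.zero_le _
    · exact hcnt i hi0 (by simpa using hi)
  · intro hf
    exact ⟨fun j => ⟨hf.1 j, by simpa using hf.le_card j⟩,
      fun i _ hi => hf.2 i (by simpa using hi)⟩

theorem ncard_isPFList_headI (m k : ℕ) :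
    {l : List ℕ | IsPFList (m + 1) l ∧ l.headI = k}.ncard =
      {g : Fin m → ℕ | IsParkingFunction (Fin.cons k g : Fin (m + 1) → ℕ)}.ncard := by
  have himage : {l : List ℕ | IsPFList (m + 1) l ∧ l.headI = k} =
      (fun g => List.ofFn (Fin.cons k g : Fin (m + 1) → ℕ)) ''
        {g | IsParkingFunction (Fin.cons k g : Fin (m + 1) → ℕ)} := by
    ext l
    simp only [Set.mem_image]
    constructor
    · rintro ⟨hl, rfl⟩
      obtain ⟨f, rfl⟩ : ∃ f : Fin (m + 1) → ℕ, List.ofFn f = l :=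
        ⟨_, (List.ofFn_congr hl.1 _).symm.trans List.ofFn_getElem⟩
      have hf : (Fin.cons (List.ofFn f).headI (Fin.tail f) : Fin (m + 1) → ℕ) = f := by
        rw [List.ofFn_succ, List.headI_cons, Fin.cons_self_tail]
      refine ⟨Fin.tail f, ?_, by rw [hf]⟩
      show IsParkingFunction (Fin.cons (List.ofFn f).headI (Fin.tail f) : Fin (m + 1) → ℕ)
      rwa [hf, ← isPFList_ofFn_iff]
    · rintro ⟨g, hg, rfl⟩
      exact ⟨(isPFList_ofFn_iff _).2 hg, by simp [List.ofFn_succ]⟩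
  rw [himage, Set.ncard_image_of_injective _
    fun g₁ g₂ h => Fin.cons_right_injective k (List.ofFn_injective h)]

theorem stmt3_general (n : ℕ) :
    (∀ k : ℕ, 1 ≤ k → k ≤ n →
      Set.ncard {l : List ℕ | IsPFList n l ∧ l.headI = k} =
        ∑ s ∈ Finset.range (n - k + 1),
          Nat.choose (n - 1) s * (s + 1) ^ (s - 1) * (n - s) ^ (n - s - 2)) ∧
    (∀ k₁ k₂ : ℕ, 1 ≤ k₁ → k₁ ≤ k₂ → k₂ ≤ n →
      Set.ncard {l : List ℕ | IsPFList n l ∧ l.headI = k₂} ≤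
        Set.ncard {l : List ℕ | IsPFList n l ∧ l.headI = k₁}) := by
  have hcount : ∀ k : ℕ, 1 ≤ k → k ≤ n →
      Set.ncard {l : List ℕ | IsPFList n l ∧ l.headI = k} =
        ∑ s ∈ Finset.range (n - k + 1),
          Nat.choose (n - 1) s * (s + 1) ^ (s - 1) * (n - s) ^ (n - s - 2) := by
    intro k hk hkn
    obtain ⟨m, rfl⟩ : ∃ m, n = m + 1 := ⟨n - 1, by omega⟩
    rw [ncard_isPFList_headI, ncard_cons_eq_sum hk hkn, Nat.add_sub_cancel]
  refine ⟨hcount, fun k₁ k₂ h₁ h₁₂ h₂ => ?_⟩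
  rw [hcount k₂ (h₁.trans h₁₂) h₂, hcount k₁ h₁ (h₁₂.trans h₂)]
  exact sum_le_sum_of_subset (range_subset_range.2 (by omega))

theorem stmt3 (n : ℕ) (hn : 1 ≤ n) :
    (∀ k : ℕ, 1 ≤ k → k ≤ n →
      Set.ncard {l : List ℕ | IsPFList n l ∧ l.headI = k} =
        ∑ s ∈ Finset.range (n - k + 1),
          Nat.choose (n - 1) s * (s + 1) ^ (s - 1) * (n - s) ^ (n - s - 2)) ∧
    (∀ k₁ k₂ : ℕ, 1 ≤ k₁ → k₁ ≤ k₂ → k₂ ≤ n →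
      Set.ncard {l : List ℕ | IsPFList n l ∧ l.headI = k₂} ≤
        Set.ncard {l : List ℕ | IsPFList n l ∧ l.headI = k₁}) :=
  stmt3_general n
end

section
/- For every n ≥ 2, the number of parking functions π of size n with π₁ = 1 equals 2(n+1)^{n−2}; equivalently, since |PF_n| = (n+1)^{n−1}, a uniformly random parking function of size n has P(π₁ = 1) = 2/(n+1). -/
/-!
Deleting the leading `1` turns a parking function of size `m + 1` with `π₁ = 1` into a sequence
`u` of length `m` in `{1, …, m + 1}` whose increasing rearrangement satisfies `bᵢ ≤ i + 1`.
Read the entries in `ℤ/N`, `N = m + 2` (Pollard's argument). The walk `w` that rises by one at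
each residue and falls by one for each entry of `u` in that residue gains `2` per period. The
translate `u - σ` is of the required kind iff `w` rises at `σ` and stays `≤ w σ + 2` for one
period, i.e. iff `w (σ + N + 1)` is a new running maximum. The running maximum grows by `2` per
period in unit steps, so this happens for exactly two residues `σ`, and double counting gives
`N · #{…} = 2 Nᵐ`.
-/

open Finset

section CycleLemma

variable {N d : ℕ} {f : ℕ → ℤ}

def IsGoodStart (N d : ℕ) (f : ℕ → ℤ) : Prop :=
  f 1 = f 0 + 1 ∧ ∀ j ∈ Ioc 0 N, f j ≤ f 0 + d

instance (N d : ℕ) (f : ℕ → ℤ) : Decidable (IsGoodStart N d f) := by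
  unfold IsGoodStart; infer_instance

lemma isGoodStart_sub_const (c : ℤ) :
    IsGoodStart N d (fun j => f j - c) ↔ IsGoodStart N d f := by
  unfold IsGoodStart
  constructor <;> rintro ⟨hrise, hbound⟩ <;>
    exact ⟨by linarith, fun j hj => by linarith [hbound j hj]⟩

lemma isGoodStart_iff_partialSups_lt (hstep : ∀ j, f (j + 1) ≤ f j + 1)
    (hper : ∀ j, f (j + N) = f j + d) {σ : ℕ} (hσ : σ < N) :
    IsGoodStart N d (fun j => f (σ + j)) ↔ partialSups f (N + σ) < f (N + σ + 1) := by
  have hrise : f (N + σ + 1) = f (σ + 1) + d := by rw [add_comm N σ, add_right_comm, hper]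
  have hperσ : f (N + σ) = f σ + d := by rw [add_comm, hper]
  simp only [IsGoodStart, add_zero, mem_Ioc]
  constructor
  · rintro ⟨hup, hbound⟩
    obtain ⟨i, hi, hmax⟩ := exists_partialSups_eq f (N + σ)
    rw [hmax, hrise, hup]
    rcases le_or_gt i σ with hiσ | hσi
    · have := hbound (N + i - σ) ⟨by omega, by omega⟩
      rw [show σ + (N + i - σ) = i + N by omega, hper] at this
      linarith
    · have := hbound (i - σ) ⟨by omega, by omega⟩
      rw [show σ + (i - σ) = i by omega] at this
      linarith
  · intro hrec
    have hsucc : f (N + σ + 1) = f (N + σ) + 1 :=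
      le_antisymm (hstep _) (by linarith [le_partialSups_of_le f (le_refl (N + σ))])
    refine ⟨by linarith, fun j hj => ?_⟩
    have := le_partialSups_of_le f (show σ + j ≤ N + σ by omega)
    linarith

lemma partialSups_succ_eq (hstep : ∀ j, f (j + 1) ≤ f j + 1) (j : ℕ) :
    partialSups f (j + 1) =
      partialSups f j + if partialSups f j < f (j + 1) then 1 else 0 := by
  have hsup : partialSups f (j + 1) = partialSups f j ⊔ f (j + 1) := partialSups_succ f j
  have hj := le_partialSups_of_le f (le_refl j)
  split_ifs with h
  · rw [hsup, max_eq_right h.le]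
    linarith [hstep j]
  · rw [hsup, max_eq_left (not_lt.1 h), add_zero]

lemma partialSups_add_period (hper : ∀ j, f (j + N) = f j + d) :
    partialSups f (N + N) = partialSups f N + d := by
  apply le_antisymm
  · refine partialSups_le _ _ _ fun i hi => ?_
    rcases le_or_gt i N with hiN | hNi
    · linarith [le_partialSups_of_le f hiN]
    · rw [show i = (i - N) + N by omega, hper]
      linarith [le_partialSups_of_le f (show i - N ≤ N by omega)]
  · obtain ⟨i, hi, hmax⟩ := exists_partialSups_eq f N
    rw [hmax, ← hper]
    exact le_partialSups_of_le f (by omega)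

/-- The cycle lemma. -/
theorem card_isGoodStart (hstep : ∀ j, f (j + 1) ≤ f j + 1)
    (hper : ∀ j, f (j + N) = f j + d) :
    #{σ ∈ range N | IsGoodStart N d (fun j => f (σ + j))} = d := by
  have hcount : (#{σ ∈ range N | IsGoodStart N d (fun j => f (σ + j))} : ℤ) =
      ∑ σ ∈ range N, (partialSups f (N + (σ + 1)) - partialSups f (N + σ)) := by
    rw [natCast_card_filter]
    refine sum_congr rfl fun σ hσ => ?_
    simp only [isGoodStart_iff_partialSups_lt hstep hper (mem_range.1 hσ)]
    rw [← add_assoc, partialSups_succ_eq hstep]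
    split_ifs <;> ring
  rw [sum_range_sub (fun σ => partialSups f (N + σ)), add_zero,
    partialSups_add_period hper] at hcount
  omega

end CycleLemma

section Parking

variable {m d : ℕ}

def residueCount (u : Fin m → ZMod (m + d)) (r : ℕ) : ℕ := #{k | u k = r}

def walk (u : Fin m → ZMod (m + d)) (j : ℕ) : ℤ :=
  j - ∑ r ∈ range j, (residueCount u r : ℤ)

lemma walk_succ_le (u : Fin m → ZMod (m + d)) (j : ℕ) : walk u (j + 1) ≤ walk u j + 1 := by
  simp only [walk, sum_range_succ, Nat.cast_add, Nat.cast_one]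
  linarith [(residueCount u j).cast_nonneg (α := ℤ)]

lemma residueCount_add_left (u : Fin m → ZMod (m + d)) (r : ℕ) :
    residueCount u (m + d + r) = residueCount u r := by
  have hcast : ((m + d + r : ℕ) : ZMod (m + d)) = r := by
    rw [Nat.cast_add, ZMod.natCast_self, zero_add]
  simp only [residueCount, hcast]

lemma residueCount_sub_natCast (u : Fin m → ZMod (m + d)) (σ r : ℕ) :
    residueCount (fun k => u k - (σ : ZMod (m + d))) r = residueCount u (σ + r) := by
  simp only [residueCount, sub_eq_iff_eq_add, Nat.cast_add, add_comm (r : ZMod (m + d))]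

lemma sum_residueCount_range [NeZero (m + d)] (u : Fin m → ZMod (m + d)) {j : ℕ}
    (hj : j ≤ m + d) : ∑ r ∈ range j, residueCount u r = #{k | (u k).val < j} := by
  rw [card_eq_sum_card_fiberwise (f := fun k => (u k).val) (t := range j)
    (fun k hk => by simpa using hk)]
  refine sum_congr rfl fun r hr => ?_
  have hrN : r < m + d := (mem_range.1 hr).trans_le hj
  simp only [residueCount, filter_filter]
  congr 1
  ext k
  simp only [mem_filter, mem_univ, true_and]
  constructor
  · intro hk
    rw [hk, ZMod.val_cast_of_lt hrN]
    exact ⟨mem_range.1 hr, rfl⟩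
  · rintro ⟨-, hk⟩
    rw [← hk, ZMod.natCast_zmod_val]

lemma walk_add_period [NeZero (m + d)] (u : Fin m → ZMod (m + d)) (j : ℕ) :
    walk u (j + (m + d)) = walk u j + d := by
  have hfull : ∑ r ∈ range (m + d), residueCount u r = m := by
    rw [sum_residueCount_range u le_rfl, filter_true_of_mem fun k _ => ZMod.val_lt (u k),
      card_univ, Fintype.card_fin]
  rw [walk, walk, add_comm j, sum_range_add]
  simp only [residueCount_add_left]
  rw [← Nat.cast_sum, hfull]
  push_cast
  ring

lemma walk_sub_natCast (u : Fin m → ZMod (m + d)) (σ j : ℕ) :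
    walk (fun k => u k - (σ : ZMod (m + d))) j = walk u (σ + j) - walk u σ := by
  simp only [walk, sum_range_add, residueCount_sub_natCast]
  push_cast
  ring

/-- Parking functions of length `m` with `d - 1` extra spots (the sorted entries satisfy
`b_i ≤ i + d - 1`; `d = 1` gives the usual parking functions). The entries are taken in
`ZMod (m + d)`, with `0` forbidden, so that cyclic translation acts on sequences. -/
def IsParking (d : ℕ) (u : Fin m → ZMod (m + d)) : Prop :=
  (∀ k, u k ≠ 0) ∧ ∀ j ∈ Ioc 0 (m + d), j ≤ #{k | (u k).val < j} + d

instance (d : ℕ) (u : Fin m → ZMod (m + d)) : Decidable (IsParking d u) := by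
  unfold IsParking; infer_instance

lemma isParking_iff_isGoodStart [NeZero (m + d)] (u : Fin m → ZMod (m + d)) :
    IsParking d u ↔ IsGoodStart (m + d) d (walk u) := by
  have hwalk : ∀ j ≤ m + d, walk u j = j - #{k | (u k).val < j} := fun j hj => by
    rw [walk, ← Nat.cast_sum, sum_residueCount_range u hj]
  have hne : #{k | (u k).val < 1} = 0 ↔ ∀ k, u k ≠ 0 := by
    simp [ZMod.val_eq_zero]
  have hzero : walk u 0 = 0 := by simp [walk]
  unfold IsParking IsGoodStart
  rw [hwalk 1 (NeZero.one_le), hzero, ← hne]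
  refine and_congr (by omega) (forall₂_congr fun j hj => ?_)
  rw [hwalk j (mem_Ioc.1 hj).2]
  omega

lemma isParking_sub_natCast_iff [NeZero (m + d)] (u : Fin m → ZMod (m + d)) (σ : ℕ) :
    IsParking d (fun k => u k - (σ : ZMod (m + d))) ↔
      IsGoodStart (m + d) d (fun j => walk u (σ + j)) := by
  rw [isParking_iff_isGoodStart, funext (walk_sub_natCast u σ), isGoodStart_sub_const]

theorem card_isParking_sub [NeZero (m + d)] (u : Fin m → ZMod (m + d)) :
    #{c | IsParking d (fun k => u k - c)} = d := by
  refine Eq.trans ?_ (card_isGoodStart (walk_succ_le u) (walk_add_period u))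
  refine card_nbij' ZMod.val (fun σ => (σ : ZMod (m + d))) ?_ ?_ ?_ ?_
  · intro c hc
    simp only [coe_filter, Set.mem_ofPred_eq, mem_univ, true_and] at hc ⊢
    rw [← isParking_sub_natCast_iff, ZMod.natCast_zmod_val]
    exact ⟨mem_range.2 (ZMod.val_lt c), hc⟩
  · intro σ hσ
    simp only [coe_filter, Set.mem_ofPred_eq, mem_univ, true_and, mem_range] at hσ ⊢
    exact (isParking_sub_natCast_iff u σ).2 hσ.2
  · intro c _
    exact ZMod.natCast_zmod_val c
  · intro σ hσ
    simp only [coe_filter, Set.mem_ofPred_eq, mem_range] at hσ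
    exact ZMod.val_cast_of_lt hσ.1

theorem card_isParking [NeZero (m + d)] (hm : m ≠ 0) :
    #{u : Fin m → ZMod (m + d) | IsParking d u} = d * (m + d) ^ (m - 1) := by
  have htranslate : ∀ c : ZMod (m + d),
      #{u : Fin m → ZMod (m + d) | IsParking d (fun k => u k - c)} = #{u | IsParking d u} :=
    fun c => card_equiv (Equiv.subRight fun _ => c) fun u => by simp; rfl
  have hdouble : #{u : Fin m → ZMod (m + d) | IsParking d u} * (m + d) = d * (m + d) ^ m :=
    calc #{u : Fin m → ZMod (m + d) | IsParking d u} * (m + d)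
        = ∑ c : ZMod (m + d),
            #{u : Fin m → ZMod (m + d) | IsParking d (fun k => u k - c)} := by
          simp [htranslate, ZMod.card, mul_comm]
      _ = ∑ u : Fin m → ZMod (m + d), #{c | IsParking d (fun k => u k - c)} := by
          simp only [card_filter]
          exact sum_comm
      _ = d * (m + d) ^ m := by simp [card_isParking_sub, ZMod.card, mul_comm]
  refine Nat.eq_of_mul_eq_mul_right (Nat.pos_of_neZero (m + d)) ?_
  rw [hdouble, mul_assoc, ← pow_succ, Nat.sub_add_cancel (Nat.one_le_iff_ne_zero.2 hm)]

end Parking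

lemma List.length_filter_ofFn {m : ℕ} (g : Fin m → ℕ) (p : ℕ → Prop) [DecidablePred p] :
    ((List.ofFn g).filter (fun x => decide (p x))).length = #{k | p (g k)} := by
  rw [← List.countP_eq_length_filter, List.ofFn_eq_map, List.countP_map, Finset.card_def,
    Finset.filter_val, Fin.univ_def]
  simp only [List.countP_eq_length_filter, Multiset.filter_coe, Multiset.coe_card]
  rfl

lemma isPFList_cons_one_ofFn_iff {m : ℕ} (u : Fin m → ZMod (m + 2)) :
    IsPFList (m + 1) (1 :: List.ofFn fun k => (u k).val) ↔ IsParking 2 u := by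
  have hcount : ∀ i, 1 ≤ i → (((1 :: List.ofFn fun k => (u k).val).filter
      (fun x => x ≤ i)).length = #{k | (u k).val < i + 1} + 1) := fun i hi => by
    rw [List.filter_cons_of_pos (by simpa using hi), List.length_cons, List.length_filter_ofFn]
    simp only [Nat.lt_succ_iff]
  unfold IsPFList IsParking
  constructor
  · rintro ⟨-, hmem, hcnt⟩
    refine ⟨fun k hk => ?_, fun j hj => ?_⟩
    · have := (hmem (u k).val (List.mem_cons_of_mem _ (List.mem_ofFn.2 ⟨k, rfl⟩))).1
      simp [hk] at this
    · obtain ⟨hj0, hjm⟩ := mem_Ioc.1 hj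
      rcases Nat.lt_or_ge j 2 with hj1 | hj2
      · omega
      · have := hcnt (j - 1) (by omega) (by omega)
        rw [hcount _ (by omega), Nat.sub_add_cancel hj0] at this
        omega
  · rintro ⟨hne, hcnt⟩
    refine ⟨by simp, fun x hx => ?_, fun i hi1 hi2 => ?_⟩
    · rcases List.mem_cons.1 hx with rfl | hx
      · omega
      · obtain ⟨k, rfl⟩ := List.mem_ofFn.1 hx
        have := ZMod.val_lt (u k)
        have := (ZMod.val_ne_zero (u k)).2 (hne k)
        omega
    · have := hcnt (i + 1) (mem_Ioc.2 ⟨by omega, by omega⟩)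
      rw [hcount i hi1]
      omega

lemma setOf_isPFList_headI_eq_image (m : ℕ) :
    {l : List ℕ | IsPFList (m + 1) l ∧ l.headI = 1} =
      (fun u : Fin m → ZMod (m + 2) => 1 :: List.ofFn fun k => (u k).val) ''
        {u | IsParking 2 u} := by
  ext l
  constructor
  · rintro ⟨hl, hhead⟩
    obtain ⟨t, rfl⟩ : ∃ t, l = 1 :: t := by
      cases l with
      | nil => simp [IsPFList] at hl
      | cons a t => exact ⟨t, by rw [← hhead, List.headI_cons]⟩
    obtain rfl : t.length = m := by simpa using hl.1
    have hlt : ∀ k : Fin t.length, t[k] < t.length + 2 := fun k => by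
      change t[(k : ℕ)] < t.length + 2
      have := (hl.2.1 _ (List.mem_cons_of_mem _ (List.getElem_mem k.2))).2
      omega
    have htu : (List.ofFn fun k => ((t[k] : ℕ) : ZMod (t.length + 2)).val) = t := by
      conv_rhs => rw [← List.ofFn_getElem (xs := t)]
      exact congrArg List.ofFn (funext fun k => ZMod.val_cast_of_lt (hlt k))
    refine ⟨fun k => (t[k] : ZMod (t.length + 2)), ?_, congrArg (List.cons 1) htu⟩
    rw [Set.mem_ofPred_eq, ← isPFList_cons_one_ofFn_iff, htu]
    exact hl
  · rintro ⟨u, hu, rfl⟩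
    exact ⟨(isPFList_cons_one_ofFn_iff u).2 hu, rfl⟩

lemma ncard_isPFList_headI_eq_one {m : ℕ} (hm : m ≠ 0) :
    {l : List ℕ | IsPFList (m + 1) l ∧ l.headI = 1}.ncard = 2 * (m + 2) ^ (m - 1) := by
  have hinj : Function.Injective
      fun u : Fin m → ZMod (m + 2) => 1 :: List.ofFn fun k => (u k).val :=
    fun u v huv => funext fun k =>
      ZMod.val_injective _ (congrFun (List.ofFn_injective (List.cons_injective huv)) k)
  rw [setOf_isPFList_headI_eq_image, Set.ncard_image_of_injective _ hinj,
    Set.ncard_eq_toFinset_card', Set.toFinset_ofPred, card_isParking hm]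

theorem stmt4 (n : ℕ) (hn : 2 ≤ n) :
    Set.ncard {l : List ℕ | IsPFList n l ∧ l.headI = 1} = 2 * (n + 1) ^ (n - 2) ∧
    (Set.ncard {l : List ℕ | IsPFList n l ∧ l.headI = 1} : ℝ) / ((n : ℝ) + 1) ^ (n - 1)
      = 2 / ((n : ℝ) + 1) := by
  obtain ⟨m, rfl⟩ : ∃ m, n = m + 2 := ⟨n - 2, by omega⟩
  rw [ncard_isPFList_headI_eq_one (m := m + 1) (by omega)]
  refine ⟨rfl, ?_⟩
  rw [show m + 2 - 1 = m + 1 by omega, pow_succ]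
  push_cast
  field_simp
  ring
end

section
/- Fix integers j and k with 1 ≤ j ≤ k. For π chosen uniformly at random from PF_n, as n → ∞, n · P(π₁ = j and K_π = k) converges to e^{−k} k^{k−1}/k!. -/
/-- `Kpi n l` is the largest `k` such that replacing the first entry of `l` by `k`
gives a parking function of size `n`. -/
noncomputable def Kpi (n : ℕ) (l : List ℕ) : ℕ :=
  sSup {k : ℕ | IsPFList n (k :: l.tail)}


/-!
Write `π = j :: t`. Lowering the first entry of a parking function keeps it a parking function,
so `K_π = k` says that `k :: t` is a parking function while `(k + 1) :: t` is not, i.e. exactly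
`k - 1` entries of `t` are `≤ k`. Splitting `t` at the value `k` then identifies such tails with
the shuffles of a parking function of size `k - 1` and a parking function of size `n - k`
shifted up by `k`, so there are `C(n-1, k-1) k^(k-2) (n-k+1)^(n-k-1)` of them. Here Pollak's
count `(m + 1)^(m - 1)` of parking functions of size `m` comes from Raney's cycle lemma: of the
`m + 1` rotations of a preference function with values in `ℤ/(m+1)`, exactly one is a parking
function. Finally `n` times the probability is the binomial term `C(n,k) p^k (1-p)^(n-k)` with
`p = k/(n+1)` divided by `k (1 - p)`, and the Poisson limit theorem gives the limit.
-/

theorem isPFList_iff_countP {n : ℕ} {l : List ℕ} :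
    IsPFList n l ↔ l.length = n ∧ (∀ x ∈ l, 1 ≤ x ∧ x ≤ n) ∧
      ∀ i, 1 ≤ i → i ≤ n → i ≤ l.countP (· ≤ i) := by
  simp only [IsPFList, List.countP_eq_length_filter]

namespace IsPFList

variable {n x : ℕ} {t : List ℕ}

theorem cons_of_le {j : ℕ} (h : IsPFList n (x :: t)) (hj : 1 ≤ j) (hjx : j ≤ x) :
    IsPFList n (j :: t) := by
  rw [isPFList_iff_countP] at h ⊢
  obtain ⟨hlen, hmem, hcount⟩ := h
  refine ⟨hlen, ?_, fun i hi hin => (hcount i hi hin).trans ?_⟩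
  · simp only [List.mem_cons, forall_eq_or_imp] at hmem ⊢
    exact ⟨⟨hj, hjx.trans hmem.1.2⟩, hmem.2⟩
  · simp only [List.countP_cons, decide_eq_true_eq]
    split_ifs <;> omega

theorem succ_cons_iff (h : IsPFList n (x :: t)) :
    IsPFList n ((x + 1) :: t) ↔ x ≤ t.countP (· ≤ x) := by
  rw [isPFList_iff_countP] at h ⊢
  obtain ⟨hlen, hmem, hcount⟩ := h
  simp only [List.mem_cons, forall_eq_or_imp] at hmem ⊢
  have hx := hmem.1
  constructor
  · rintro ⟨-, ⟨-, hxn⟩, hcount'⟩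
    simpa using hcount' x hx.1 (by omega)
  · intro hxt
    have htn : t.countP (· ≤ x) < n := by
      simp only [List.length_cons] at hlen
      exact hlen ▸ Nat.lt_succ_of_le List.countP_le_length
    refine ⟨hlen, ⟨⟨by omega, by omega⟩, hmem.2⟩, fun i hi hin => ?_⟩
    rcases eq_or_ne i x with rfl | hix
    · simpa using hxt
    have := hcount i hi hin
    simp only [List.countP_cons, decide_eq_true_eq] at this ⊢
    split_ifs at this ⊢ <;> omega

end IsPFList

theorem kpi_eq_iff {n k : ℕ} {l : List ℕ} (hk : 1 ≤ k) :
    Kpi n l = k ↔ IsPFList n (k :: l.tail) ∧ ¬IsPFList n ((k + 1) :: l.tail) := by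
  rw [Kpi]
  set S := {m | IsPFList n (m :: l.tail)}
  have hS : BddAbove S := ⟨n, fun m hm => (hm.2.1 m List.mem_cons_self).2⟩
  constructor
  · intro hK
    have hne : S.Nonempty := by
      by_contra h
      rw [Set.not_nonempty_iff_eq_empty.1 h, csSup_empty, bot_eq_zero'] at hK
      omega
    have hkS : k ∈ S := hK ▸ Nat.sSup_mem hne hS
    exact ⟨hkS, fun h => absurd (le_csSup hS h) (by omega)⟩
  · rintro ⟨hkS, hk1⟩
    refine IsGreatest.csSup_eq ⟨hkS, fun m hm => ?_⟩
    by_contra! hkm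
    exact hk1 (hm.cons_of_le (by omega) hkm)

theorem isPFList_succ_cons_self_iff {m : ℕ} {w : List ℕ} :
    IsPFList (m + 1) ((m + 1) :: w) ↔ IsPFList m w := by
  simp only [isPFList_iff_countP, List.length_cons, add_left_inj, List.mem_cons,
    forall_eq_or_imp, le_refl, and_true, le_add_iff_nonneg_left, zero_le, true_and]
  refine and_congr_right fun hlen => ?_
  have hbelow (i : ℕ) (hi : i ≤ m) :
      ((m + 1) :: w).countP (· ≤ i) = w.countP (· ≤ i) := by
    simp only [List.countP_cons, decide_eq_true_eq, show ¬m + 1 ≤ i by omega, if_false, add_zero]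
  constructor
  · rintro ⟨hmem, hcount⟩
    have hcount' : ∀ i, 1 ≤ i → i ≤ m → i ≤ w.countP (· ≤ i) := fun i hi him =>
      hbelow i him ▸ hcount i hi (by omega)
    refine ⟨fun x hx => ⟨(hmem x hx).1, ?_⟩, hcount'⟩
    by_contra! hxm
    have hlt : w.countP (· ≤ m) < m := by
      rw [List.countP_eq_length_filter, ← hlen]
      refine List.length_filter_lt_length_iff_exists.2 ⟨x, hx, ?_⟩
      simp only [decide_eq_true_eq, not_le]
      omega
    have := hcount' m (by omega) le_rfl
    omega
  · rintro ⟨hmem, hcount⟩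
    refine ⟨fun x hx => ⟨(hmem x hx).1, by linarith [(hmem x hx).2]⟩, fun i hi him => ?_⟩
    rcases Nat.lt_or_ge i (m + 1) with him' | him'
    · exact hbelow i (by omega) ▸ hcount i hi (by omega)
    · have : w.countP (· ≤ i) = m :=
        hlen ▸ List.countP_eq_length.2 fun x hx => by
          simp only [decide_eq_true_eq]
          linarith [(hmem x hx).2]
      rw [List.countP_cons, this, if_pos (by simpa using him')]
      omega

theorem List.filter_not_le_eq_filter_lt (c : ℕ) (w : List ℕ) :
    w.filter (fun x => !decide (x ≤ c)) = w.filter (c < ·) :=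
  List.filter_congr fun x _ => by simp only [← decide_not, not_le]

theorem countP_le_eq_filter_le_add_filter_lt (c i : ℕ) (w : List ℕ) :
    w.countP (· ≤ i) =
      (w.filter (· ≤ c)).countP (· ≤ i) + (w.filter (c < ·)).countP (· ≤ i) := by
  rw [List.countP_eq_countP_filter_add w _ (· ≤ c), List.filter_not_le_eq_filter_lt]

theorem countP_le_eq_filter_le {c i : ℕ} (hi : i ≤ c) (w : List ℕ) :
    w.countP (· ≤ i) = (w.filter (· ≤ c)).countP (· ≤ i) := by
  rw [countP_le_eq_filter_le_add_filter_lt c, add_eq_left, List.countP_eq_zero]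
  intro x hx
  have : c < x := by simpa using List.of_mem_filter hx
  simpa using hi.trans_lt this

theorem countP_le_add_eq {c : ℕ} {w : List ℕ} (hc : w.countP (· ≤ c) = c) (i : ℕ) :
    w.countP (· ≤ i + c) = c + ((w.filter (c < ·)).map (· - c)).countP (· ≤ i) := by
  have hle : ∀ x ∈ w.filter (· ≤ c), decide (x ≤ i + c) := fun x hx => by
    have : x ≤ c := by simpa using List.of_mem_filter hx
    simpa using this.trans (Nat.le_add_left c i)
  rw [countP_le_eq_filter_le_add_filter_lt c, List.countP_eq_length.2 hle,
    ← List.countP_eq_length_filter, hc, List.countP_map]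
  congr 1
  refine List.countP_congr fun x hx => ?_
  have : c < x := by simpa using List.of_mem_filter hx
  simp only [Function.comp_apply, decide_eq_true_eq]
  omega

theorem isPFList_iff_of_countP_eq {n c : ℕ} {w : List ℕ} (hcn : c ≤ n)
    (hc : w.countP (· ≤ c) = c) :
    IsPFList n w ↔
      IsPFList c (w.filter (· ≤ c)) ∧ IsPFList (n - c) ((w.filter (c < ·)).map (· - c)) := by
  have hu : (w.filter (· ≤ c)).length = c := List.countP_eq_length_filter ▸ hc
  have hlen : w.length = c + (w.filter (c < ·)).length := by
    rw [List.length_eq_length_filter_add (· ≤ c), List.filter_not_le_eq_filter_lt, hu]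
  simp only [isPFList_iff_countP, List.length_map, List.mem_filter, List.mem_map,
    decide_eq_true_eq, hu, true_and]
  constructor
  · rintro ⟨hwlen, hwmem, hwcount⟩
    refine ⟨⟨fun x hx => ⟨(hwmem x hx.1).1, hx.2⟩,
        fun i hi hic => countP_le_eq_filter_le hic w ▸ hwcount i hi (hic.trans hcn)⟩,
      ⟨by omega, ?_, fun i hi hin => ?_⟩⟩
    · rintro _ ⟨y, ⟨hy, hcy⟩, rfl⟩
      have := (hwmem y hy).2
      omega
    · have := hwcount (i + c) (by omega) (by omega)
      rw [countP_le_add_eq hc] at this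
      omega
  · rintro ⟨⟨humem, hucount⟩, ⟨hvlen, hvmem, hvcount⟩⟩
    refine ⟨by omega, fun x hx => ?_, fun i hi hin => ?_⟩
    · by_cases hxc : x ≤ c
      · have := humem x ⟨hx, hxc⟩
        omega
      · have := hvmem (x - c) ⟨x, ⟨hx, by omega⟩, rfl⟩
        omega
    · by_cases hic : i ≤ c
      · exact countP_le_eq_filter_le hic w ▸ hucount i hi hic
      · have := countP_le_add_eq hc (i - c)
        rw [Nat.sub_add_cancel (by omega)] at this
        have := hvcount (i - c) (by omega) (by omega)
        omega

theorem isPFList_cons_and_not_succ_cons_iff {n k : ℕ} {t : List ℕ} (hk : 1 ≤ k)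
    (hkn : k ≤ n) :
    IsPFList n (k :: t) ∧ ¬IsPFList n ((k + 1) :: t) ↔
      IsPFList (k - 1) (t.filter (· ≤ k)) ∧
        IsPFList (n - k) ((t.filter (k < ·)).map (· - k)) := by
  obtain ⟨m, rfl⟩ : ∃ m, k = m + 1 := ⟨k - 1, by omega⟩
  rw [Nat.add_sub_cancel]
  have hdecomp (htm : t.countP (· ≤ m + 1) = m) : IsPFList n ((m + 1) :: t) ↔
      IsPFList m (t.filter (· ≤ m + 1)) ∧
        IsPFList (n - (m + 1)) ((t.filter (m + 1 < ·)).map (· - (m + 1))) := by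
    have hc : ((m + 1) :: t).countP (· ≤ m + 1) = m + 1 := by simp [htm]
    rw [isPFList_iff_of_countP_eq hkn hc, List.filter_cons_of_pos (by simp),
      List.filter_cons_of_neg (by simp), isPFList_succ_cons_self_iff]
  constructor
  · rintro ⟨h, hnot⟩
    rw [h.succ_cons_iff] at hnot
    have hge := ((isPFList_iff_countP.1 h).2.2 (m + 1) hk hkn)
    simp only [List.countP_cons, decide_eq_true_eq, le_refl, if_true] at hge
    exact (hdecomp (by omega)).1 h
  · rintro ⟨hu, hv⟩
    have htm : t.countP (· ≤ m + 1) = m := List.countP_eq_length_filter ▸ hu.1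
    have h := (hdecomp htm).2 ⟨hu, hv⟩
    exact ⟨h, by rw [h.succ_cons_iff]; omega⟩

theorem ncard_setOf_length_eq_count_true_eq (N K : ℕ) :
    {m : List Bool | m.length = N ∧ m.count true = K}.ncard = N.choose K := by
  induction N generalizing K with
  | zero =>
    have : {m : List Bool | m.length = 0 ∧ m.count true = K} = if K = 0 then {[]} else ∅ := by
      ext m
      split_ifs <;> rcases m with _ | ⟨_, m⟩ <;> simp [*, eq_comm]
    rw [this]
    split_ifs with hK
    · simp [hK]
    · simp [Nat.choose_eq_zero_of_lt (Nat.pos_of_ne_zero hK)]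
  | succ N ih =>
    have hsplit : {m : List Bool | m.length = N + 1 ∧ m.count true = K} =
        List.cons false '' {m | m.length = N ∧ m.count true = K} ∪
          List.cons true '' {m | m.length = N ∧ m.count true + 1 = K} := by
      ext m
      rcases m with _ | ⟨_ | _, m⟩ <;> simp
    have hfin (P : List Bool → Prop) : {m : List Bool | m.length = N ∧ P m}.Finite :=
      (List.finite_length_eq Bool N).subset fun m hm => hm.1
    rw [hsplit, Set.ncard_union_eq ?_ ((hfin _).image _) ((hfin _).image _),
      Set.ncard_image_of_injective _ List.cons_injective,
      Set.ncard_image_of_injective _ List.cons_injective, ih]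
    · cases K with
      | zero => simp
      | succ K => simp [ih, Nat.choose_succ_succ', add_comm]
    · exact Set.disjoint_left.2 fun _ ⟨_, _, hfalse⟩ ⟨_, _, htrue⟩ => by
        cases hfalse.trans htrue.symm

section Shuffle

variable {α : Type*}

def mergeByMask : List Bool → List α → List α → List α
  | true :: m, x :: u, v => x :: mergeByMask m u v
  | false :: m, u, x :: v => x :: mergeByMask m u v
  | _, _, _ => []

theorem mergeByMask_map_filter (p : α → Bool) (t : List α) :
    mergeByMask (t.map p) (t.filter p) (t.filter (!p ·)) = t := by
  induction t with
  | nil => rfl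
  | cons x t ih => cases hx : p x <;> simp [hx, mergeByMask, ih]

theorem map_filter_mergeByMask (p : α → Bool) :
    ∀ (m : List Bool) (u v : List α), m.count true = u.length → m.count false = v.length →
      (∀ x ∈ u, p x) → (∀ x ∈ v, p x = false) →
      (mergeByMask m u v).map p = m ∧ (mergeByMask m u v).filter p = u ∧
        (mergeByMask m u v).filter (!p ·) = v
  | [], [], [], _, _, _, _ => by simp [mergeByMask]
  | true :: m, x :: u, v, hu, hv, hpu, hpv => by
    obtain ⟨h1, h2, h3⟩ := map_filter_mergeByMask p m u v (by simpa using hu)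
      (by simpa using hv) (fun y hy => hpu y (by simp [hy])) hpv
    simp [mergeByMask, hpu x (by simp), h1, h2, h3]
  | false :: m, u, x :: v, hu, hv, hpu, hpv => by
    obtain ⟨h1, h2, h3⟩ := map_filter_mergeByMask p m u v (by simpa using hu)
      (by simpa using hv) hpu (fun y hy => hpv y (by simp [hy]))
    simp [mergeByMask, hpv x (by simp), h1, h2, h3]
  | [], _ :: _, _, hu, _, _, _ | [], _, _ :: _, _, hv, _, _ => by simp_all
  | true :: _, [], _, hu, _, _, _ | false :: _, _, [], _, hv, _, _ => by simp_all

theorem ncard_filter_mem_and_filter_not_mem (p : α → Bool) {U V : Set (List α)} {a b : ℕ}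
    (hU : ∀ u ∈ U, u.length = a ∧ ∀ x ∈ u, p x)
    (hV : ∀ v ∈ V, v.length = b ∧ ∀ x ∈ v, p x = false) :
    {t : List α | t.filter p ∈ U ∧ t.filter (!p ·) ∈ V}.ncard =
      (a + b).choose a * U.ncard * V.ncard := by
  set split : List α → List Bool × List α × List α :=
    fun t => (t.map p, t.filter p, t.filter (!p ·))
  have hinj : split.Injective := fun t t' h => by
    rw [← mergeByMask_map_filter p t, ← mergeByMask_map_filter p t']
    simp only [split, Prod.mk.injEq] at h
    rw [h.1, h.2.1, h.2.2]
  have hcount (t : List α) : (t.map p).count true = (t.filter p).length := by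
    rw [List.count_eq_countP, List.countP_map, List.countP_eq_length_filter]
    congr 1
    exact List.filter_congr fun x _ => by simp
  have himage : split '' {t | t.filter p ∈ U ∧ t.filter (!p ·) ∈ V} =
      {m : List Bool | m.length = a + b ∧ m.count true = a} ×ˢ U ×ˢ V := by
    ext ⟨m, u, v⟩
    simp only [Set.mem_image, Set.mem_ofPred_eq, Set.mem_prod, split, Prod.mk.injEq]
    constructor
    · rintro ⟨t, ⟨htu, htv⟩, rfl, rfl, rfl⟩
      refine ⟨⟨?_, ?_⟩, htu, htv⟩
      · rw [List.length_map, List.length_eq_length_filter_add p, (hU _ htu).1, (hV _ htv).1]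
      · rw [hcount, (hU _ htu).1]
    · rintro ⟨⟨hm, hma⟩, hu, hv⟩
      have hmb : m.count false = v.length := by
        have := List.count_true_add_count_false m
        rw [(hV v hv).1]
        omega
      obtain ⟨h1, h2, h3⟩ := map_filter_mergeByMask p m u v (by rw [hma, (hU u hu).1]) hmb
        (hU u hu).2 (hV v hv).2
      exact ⟨mergeByMask m u v, ⟨by rwa [h2], by rwa [h3]⟩, h1, h2, h3⟩
  rw [← Set.ncard_image_of_injective _ hinj, himage, Set.ncard_prod, Set.ncard_prod,
    ncard_setOf_length_eq_count_true_eq, mul_assoc]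

end Shuffle

theorem existsUnique_lt_forall_le_add {G : ℕ → ℤ} {p : ℕ} (hp : 0 < p)
    (hG : ∀ t, G (t + p) = G t - 1) : ∃! r, r < p ∧ ∀ j < p, G r ≤ G (r + j) := by
  -- The first minimiser of `G` on `[0, p)` is good, and two good `r < r' < r + p` would give
  -- `G r ≤ G r' ≤ G (r + p) = G r - 1`.
  have hno_two (a b : ℕ) (ha : ∀ j < p, G a ≤ G (a + j)) (hb : ∀ j < p, G b ≤ G (b + j))
      (hab : a < b) (hba : b < a + p) : False := by
    have h1 := ha (b - a) (by omega)
    have h2 := hb (a + p - b) (by omega)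
    rw [Nat.add_sub_cancel' hab.le] at h1
    rw [show b + (a + p - b) = a + p by omega, hG] at h2
    omega
  obtain ⟨r, hr, hmin⟩ := Finset.exists_min_image (Finset.range p) (fun r => toLex (G r, r))
    ⟨0, Finset.mem_range.2 hp⟩
  replace hr := Finset.mem_range.1 hr
  replace hmin (t : ℕ) (ht : t < p) : G r < G t ∨ G r = G t ∧ r ≤ t := by
    simpa only [Prod.Lex.le_iff, ofLex_toLex] using hmin t (Finset.mem_range.2 ht)
  have hgood : ∀ j < p, G r ≤ G (r + j) := fun j hj => by
    rcases lt_or_ge (r + j) p with h | h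
    · have := hmin (r + j) h
      omega
    · have := hmin (r + j - p) (by omega)
      have : G (r + j) = G (r + j - p) - 1 := by rw [← hG, Nat.sub_add_cancel h]
      omega
  refine ⟨r, ⟨hr, hgood⟩, fun r' ⟨hr', hgood'⟩ => ?_⟩
  rcases lt_trichotomy r r' with h | h | h
  · exact (hno_two r r' hgood hgood' h (by omega)).elim
  · exact h.symm
  · exact (hno_two r' r hgood' hgood h (by omega)).elim

theorem ZMod.sum_range_natCast {M : Type*} [AddCommMonoid M] {p : ℕ} [NeZero p]
    (f : ZMod p → M) : ∑ i ∈ Finset.range p, f i = ∑ c, f c := by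
  refine Finset.sum_nbij' (fun i => (i : ZMod p)) ZMod.val ?_ ?_ ?_ ?_ ?_
  all_goals intro a ha
  all_goals simp_all [ZMod.val_lt, Nat.mod_eq_of_lt]

/-- Raney's cycle lemma. -/
theorem ZMod.existsUnique_forall_sum_range_nonneg {p : ℕ} [NeZero p] (x : ZMod p → ℤ)
    (hx : ∑ c, x c = -1) :
    ∃! t : ZMod p, ∀ j < p, 0 ≤ ∑ i ∈ Finset.range j, x (t + i) := by
  set G : ℕ → ℤ := fun t => ∑ i ∈ Finset.range t, x i
  have hwindow (r j : ℕ) : ∑ i ∈ Finset.range j, x ((r : ZMod p) + i) = G (r + j) - G r := by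
    simp only [G, Finset.sum_range_add, Nat.cast_add, add_sub_cancel_left]
  have hperiod (t : ℕ) : G (t + p) = G t - 1 := by
    have hshift : ∑ c, x ((t : ZMod p) + c) = ∑ c, x c := Equiv.sum_comp (Equiv.addLeft _) x
    have := hwindow t p
    rw [ZMod.sum_range_natCast (fun c => x ((t : ZMod p) + c)), hshift, hx] at this
    linarith
  have hiff (t : ZMod p) : (∀ j < p, 0 ≤ ∑ i ∈ Finset.range j, x (t + i)) ↔
      ∀ j < p, G t.val ≤ G (t.val + j) := by
    conv_lhs => rw [← ZMod.natCast_zmod_val t]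
    simp only [hwindow, sub_nonneg]
  obtain ⟨r, ⟨hr, hgood⟩, huniq⟩ := existsUnique_lt_forall_le_add (NeZero.pos p) hperiod
  refine ⟨r, (hiff r).2 (by rwa [ZMod.val_natCast_of_lt hr]), fun t ht => ?_⟩
  rw [← ZMod.natCast_zmod_val t, huniq t.val ⟨ZMod.val_lt t, (hiff t).1 ht⟩]

section Pollak

open Finset

variable {m : ℕ}

def IsZeroBasedPF (g : Fin m → ZMod (m + 1)) : Prop :=
  ∀ j ≤ m, j ≤ #{a | (g a).val < j}

instance : DecidablePred (IsZeroBasedPF (m := m)) := fun g => by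
  unfold IsZeroBasedPF
  infer_instance

theorem card_filter_sub_val_lt (f : Fin m → ZMod (m + 1)) (t : ZMod (m + 1)) {j : ℕ}
    (hj : j ≤ m + 1) : #{a | (f a - t).val < j} = ∑ i ∈ range j, #{a | f a = t + i} := by
  rw [card_eq_sum_card_fiberwise (f := fun a => (f a - t).val) (t := range j)
    (fun a ha => mem_range.2 (mem_filter.1 ha).2)]
  refine sum_congr rfl fun i hi => congrArg card (Finset.ext fun a => ?_)
  have hi : i < m + 1 := (mem_range.1 hi).trans_le hj
  simp only [mem_filter, mem_univ, true_and]
  constructor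
  · rintro ⟨-, hfa⟩
    rw [← hfa, ZMod.natCast_zmod_val, add_sub_cancel]
  · intro hfa
    rw [hfa, add_sub_cancel_left, ZMod.val_natCast_of_lt hi]
    exact ⟨mem_range.1 ‹_›, rfl⟩

theorem existsUnique_isZeroBasedPF_sub (f : Fin m → ZMod (m + 1)) :
    ∃! t, IsZeroBasedPF fun a => f a - t := by
  have hsum : ∑ c, #{a | f a = c} = m := by
    rw [← card_eq_sum_card_fiberwise fun a _ => mem_univ (f a)]
    simp
  have hx : ∑ c : ZMod (m + 1), ((#{a | f a = c} : ℤ) - 1) = -1 := by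
    simp only [sum_sub_distrib, ← Nat.cast_sum, hsum, sum_const, card_univ, ZMod.card]
    simp
  refine (existsUnique_congr fun t => ?_).1 (ZMod.existsUnique_forall_sum_range_nonneg _ hx)
  simp only [IsZeroBasedPF, Nat.lt_succ_iff]
  refine forall₂_congr fun j hj => ?_
  rw [sum_sub_distrib, ← Nat.cast_sum, ← card_filter_sub_val_lt f t (by omega)]
  simp

theorem card_isZeroBasedPF :
    (m + 1) * #{g : Fin m → ZMod (m + 1) | IsZeroBasedPF g} = (m + 1) ^ m := by
  have hshift (t : ZMod (m + 1)) : #{f : Fin m → ZMod (m + 1) | IsZeroBasedPF fun a => f a - t} =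
      #{g | IsZeroBasedPF g} :=
    card_equiv (Equiv.subRight fun _ => t) fun f => by simp [Pi.sub_def]
  have hone (f : Fin m → ZMod (m + 1)) : #{t | IsZeroBasedPF fun a => f a - t} = 1 := by
    obtain ⟨t, ht, huniq⟩ := existsUnique_isZeroBasedPF_sub f
    rw [card_eq_one]
    exact ⟨t, Finset.ext fun s => by simpa using ⟨huniq s, fun h => h ▸ ht⟩⟩
  calc (m + 1) * #{g : Fin m → ZMod (m + 1) | IsZeroBasedPF g}
      = ∑ t : ZMod (m + 1), #{f : Fin m → ZMod (m + 1) | IsZeroBasedPF fun a => f a - t} := by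
        simp [hshift, ZMod.card]
    _ = ∑ f : Fin m → ZMod (m + 1), #{t | IsZeroBasedPF fun a => f a - t} := by
        simp only [card_filter]
        exact sum_comm
    _ = (m + 1) ^ m := by simp [hone, ZMod.card]

theorem List.countP_ofFn {α : Type*} {n : ℕ} (v : Fin n → α) (P : α → Prop)
    [DecidablePred P] :
    (List.ofFn v).countP (fun x => decide (P x)) = #{a | P (v a)} := by
  rw [← Multiset.coe_countP, ← Fin.univ_val_map, Multiset.countP_map]
  rfl

theorem isPFList_ofFn_val_add_one_iff (g : Fin m → ZMod (m + 1)) :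
    IsPFList m (List.ofFn fun a => (g a).val + 1) ↔ IsZeroBasedPF g := by
  have hcount (i : ℕ) :
      (List.ofFn fun a => (g a).val + 1).countP (· ≤ i) = #{a | (g a).val < i} := by
    rw [List.countP_ofFn]
    simp only [Nat.add_one_le_iff]
  simp only [isPFList_iff_countP, List.length_ofFn, List.mem_ofFn, forall_exists_index,
    forall_apply_eq_imp_iff, hcount, true_and, IsZeroBasedPF]
  constructor
  · rintro ⟨-, hcount⟩ j hj
    rcases Nat.eq_zero_or_pos j with rfl | hj0
    · exact Nat.zero_le _
    · exact hcount j hj0 hj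
  · intro h
    have hall : #{a | (g a).val < m} = #(univ : Finset (Fin m)) :=
      le_antisymm (card_filter_le _ _) (by simpa using h m le_rfl)
    rw [card_filter_eq_iff] at hall
    refine ⟨fun a => ⟨by omega, ?_⟩, fun i _ him => h i him⟩
    have := hall a (mem_univ a)
    omega

theorem ncard_isPFList (m : ℕ) : {l | IsPFList m l}.ncard = (m + 1) ^ (m - 1) := by
  set enc : (Fin m → ZMod (m + 1)) → List ℕ := fun g => List.ofFn fun a => (g a).val + 1
  have henc : enc.Injective := fun g g' h => funext fun a =>
    ZMod.val_injective _ (by simpa [enc] using congrFun (List.ofFn_injective h) a)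
  have himage : {l | IsPFList m l} = enc '' {g | IsZeroBasedPF g} := by
    ext l
    refine ⟨fun hl => ?_, ?_⟩
    · have hl' : enc (fun a => ((l.getD a 1 - 1 : ℕ) : ZMod (m + 1))) = l := by
        refine List.ext_getElem (by simp [enc, hl.1]) fun i h1 h2 => ?_
        have := hl.2.1 _ (List.getElem_mem h2)
        simp only [enc, List.getElem_ofFn, List.getD_eq_getElem _ _ h2]
        rw [ZMod.val_natCast_of_lt (by omega)]
        omega
      refine ⟨_, (isPFList_ofFn_val_add_one_iff _).1 ?_, hl'⟩
      rwa [← hl'] at hl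
    · rintro ⟨g, hg, rfl⟩
      exact (isPFList_ofFn_val_add_one_iff g).2 hg
  rw [himage, Set.ncard_image_of_injective _ henc, Set.ncard_eq_toFinset_card',
    Set.toFinset_ofPred]
  refine Nat.eq_of_mul_eq_mul_left m.succ_pos (card_isZeroBasedPF.trans ?_)
  cases m <;> simp [pow_succ']

end Pollak

theorem setOf_head_kpi_eq {n j k : ℕ} (hj : 1 ≤ j) (hjk : j ≤ k) (hkn : k ≤ n) :
    {l | IsPFList n l ∧ l.headI = j ∧ Kpi n l = k} = List.cons j ''
      {t | IsPFList (k - 1) (t.filter (· ≤ k)) ∧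
        IsPFList (n - k) ((t.filter (k < ·)).map (· - k))} := by
  have hk : 1 ≤ k := hj.trans hjk
  ext l
  constructor
  · rintro ⟨hl, hhead, hK⟩
    rcases l with _ | ⟨a, t⟩
    · simp only [List.headI_nil, Nat.default_eq_zero] at hhead; omega
    · obtain rfl : a = j := hhead
      exact ⟨t, (isPFList_cons_and_not_succ_cons_iff hk hkn).1 ((kpi_eq_iff hk).1 hK), rfl⟩
  · rintro ⟨t, ht, rfl⟩
    have hK := (isPFList_cons_and_not_succ_cons_iff hk hkn).2 ht
    exact ⟨hK.1.cons_of_le hj hjk, rfl, (kpi_eq_iff hk).2 hK⟩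

theorem isPFList_map_sub_iff {m k : ℕ} {v : List ℕ} (hv : ∀ x ∈ v, k < x) :
    IsPFList m (v.map (· - k)) ↔ v ∈ List.map (· + k) '' {w | IsPFList m w} := by
  constructor
  · intro h
    refine ⟨_, h, ?_⟩
    rw [List.map_map]
    conv_rhs => rw [← List.map_id v]
    refine List.map_congr_left fun x hx => ?_
    have := hv x hx
    simp only [Function.comp_apply, id_eq]
    omega
  · rintro ⟨w, hw, rfl⟩
    simpa [List.map_map, Function.comp_def] using hw

theorem ncard_head_kpi_eq {n j k : ℕ} (hj : 1 ≤ j) (hjk : j ≤ k) (hkn : k ≤ n) :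
    {l | IsPFList n l ∧ l.headI = j ∧ Kpi n l = k}.ncard =
      (n - 1).choose (k - 1) * {u | IsPFList (k - 1) u}.ncard *
        {v | IsPFList (n - k) v}.ncard := by
  have htail : {t : List ℕ | IsPFList (k - 1) (t.filter (· ≤ k)) ∧
        IsPFList (n - k) ((t.filter (k < ·)).map (· - k))} =
      {t : List ℕ | t.filter (· ≤ k) ∈ {u | IsPFList (k - 1) u} ∧
        t.filter (fun x => !decide (x ≤ k)) ∈
          List.map (· + k) '' {v | IsPFList (n - k) v}} := by
    ext t
    simp only [Set.mem_ofPred_eq, List.filter_not_le_eq_filter_lt]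
    rw [isPFList_map_sub_iff fun x hx => by simpa using List.of_mem_filter hx]
  rw [setOf_head_kpi_eq hj hjk hkn, Set.ncard_image_of_injective _ List.cons_injective, htail,
    ncard_filter_mem_and_filter_not_mem (a := k - 1) (b := n - k),
    Set.ncard_image_of_injective _ (List.map_injective_iff.2 (add_left_injective k))]
  · rw [show k - 1 + (n - k) = n - 1 by omega]
  · intro u hu
    exact ⟨hu.1, fun x hx => by simpa using (hu.2.1 x hx).2.trans (Nat.sub_le k 1)⟩
  · rintro _ ⟨v, hv, rfl⟩
    refine ⟨by simp [hv.1], fun x hx => ?_⟩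
    obtain ⟨y, hy, rfl⟩ := List.mem_map.1 hx
    have := (hv.2.1 y hy).1
    simp only [add_le_iff_nonpos_left, nonpos_iff_eq_zero, decide_eq_false_iff_not]; omega

theorem pow_sub_two_mul_self {k : ℕ} (hk : 1 ≤ k) : (k : ℝ) ^ (k - 2) * k = k ^ (k - 1) := by
  rcases hk.eq_or_lt with rfl | hk2
  · simp
  · rw [← pow_succ]
    congr 1
    omega

theorem mul_choose_mul_pow_div_pow_eq {n k : ℕ} (hk : 1 ≤ k) (hkn : k + 1 ≤ n) :
    (n : ℝ) * (((n - 1).choose (k - 1) * k ^ (k - 2) * (n - k + 1) ^ (n - k - 1) : ℕ) /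
        ((n : ℝ) + 1) ^ (n - 1)) =
      n.choose k * (k / ((n : ℝ) + 1)) ^ k * (1 - k / ((n : ℝ) + 1)) ^ (n - k) /
        (k * (1 - k / ((n : ℝ) + 1))) := by
  obtain ⟨d, rfl⟩ : ∃ d, n = k + 1 + d := ⟨n - (k + 1), by omega⟩
  have hchoose : ((k + d).choose (k - 1) : ℝ) = k * (k + 1 + d).choose k / (k + 1 + d : ℕ) := by
    have := Nat.add_one_mul_choose_eq (k + d) (k - 1)
    rw [Nat.sub_add_cancel hk, mul_comm _ k, show k + d + 1 = k + 1 + d by omega] at this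
    rw [eq_div_iff (by positivity), mul_comm]
    exact_mod_cast this
  have hbase :
      1 - k / (((k + 1 + d : ℕ) : ℝ) + 1) = (d + 2) / (((k + 1 + d : ℕ) : ℝ) + 1) := by
    field_simp
    push_cast
    ring
  have hkk : (k : ℝ) ^ k = k ^ (k - 2) * k * k := by
    rw [pow_sub_two_mul_self hk, pow_sub_one_mul (by omega : k ≠ 0)]
  rw [hbase, show k + 1 + d - 1 = k + d by omega, show k + 1 + d - k + 1 = d + 2 by omega,
    show k + 1 + d - k - 1 = d by omega, show k + 1 + d - k = d + 1 by omega]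
  simp only [div_pow, hkk]
  push_cast [hchoose]
  field_simp
  ring

open Filter Topology in
theorem tendsto_mul_choose_mul_pow_div_pow {k : ℕ} (hk : 1 ≤ k) :
    Tendsto (fun n : ℕ => (n : ℝ) *
        (((n - 1).choose (k - 1) * k ^ (k - 2) * (n - k + 1) ^ (n - k - 1) : ℕ) /
          ((n : ℝ) + 1) ^ (n - 1)))
      atTop (𝓝 (Real.exp (-k) * k ^ (k - 1) / k.factorial)) := by
  set p : ℕ → ℝ := fun n => k / ((n : ℝ) + 1)
  have hp : Tendsto (fun n : ℕ => (n : ℝ) * p n) atTop (𝓝 k) := by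
    have := (tendsto_natCast_div_add_atTop (1 : ℝ)).const_mul (k : ℝ)
    rw [mul_one] at this
    refine this.congr fun n => ?_
    simp only [p]
    ring
  have hk0 : (k : ℝ) ≠ 0 := by positivity
  have hden : Tendsto (fun n => (k : ℝ) * (1 - p n)) atTop (𝓝 k) := by
    simpa using (tendsto_const_nhds (x := (k : ℝ))).mul ((tendsto_const_nhds (x := (1 : ℝ))).sub
      (ProbabilityTheory.tendsto_zero_of_tendsto_mul_atTop hp))
  have hlimit : Real.exp (-k) * k ^ (k - 1) / k.factorial =
      Real.exp (-k) * k ^ k / k.factorial / k := by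
    rw [← pow_sub_one_mul (by omega : k ≠ 0) (k : ℝ)]
    field_simp
  rw [hlimit]
  refine ((ProbabilityTheory.tendsto_choose_mul_pow_of_tendsto_mul_atTop k hp).div hden
    hk0).congr' ?_
  filter_upwards [eventually_ge_atTop (k + 1)] with n hn
  exact (mul_choose_mul_pow_div_pow_eq hk hn).symm

theorem stmt5 (j k : ℕ) (hj : 1 ≤ j) (hjk : j ≤ k) :
    Filter.Tendsto
      (fun n : ℕ =>
        (n : ℝ) *
          ((Set.ncard {l : List ℕ | IsPFList n l ∧ l.headI = j ∧ Kpi n l = k} : ℝ) /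
            ((n : ℝ) + 1) ^ (n - 1)))
      Filter.atTop
      (nhds (Real.exp (-(k : ℝ)) * (k : ℝ) ^ (k - 1) / (Nat.factorial k : ℝ))) := by
  have hk : 1 ≤ k := hj.trans hjk
  refine (tendsto_mul_choose_mul_pow_div_pow hk).congr' ?_
  filter_upwards [Filter.eventually_ge_atTop k] with n hkn
  rw [ncard_head_kpi_eq hj hjk hkn, ncard_isPFList, ncard_isPFList, Nat.sub_add_cancel hk,
    Nat.sub_sub k 1 1]
end

section
/- Let n ≥ 1, let ε > 0, and let x = i/n for some integer 0 ≤ i ≤ n. For π chosen uniformly at random from PF_n, P( |F^π(x) − x| > ε ) ≤ 2n·e^{−2ε²n}, where F^π(x) = (1/n)·#{j : π_j ≤ nx}. -/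
open MeasureTheory ProbabilityTheory Finset

theorem card_mean_add_le_card_filter_mem_le {ι α : Type*} [Fintype ι] [DecidableEq ι]
    [Fintype α] [Nonempty α] [DecidableEq α] (s : Finset α) {t : ℝ} (ht : 0 ≤ t) :
    (#{f : ι → α | Fintype.card ι * (#s / Fintype.card α : ℝ) + t ≤ #{j | f j ∈ s}} : ℝ) ≤
      Fintype.card α ^ Fintype.card ι * Real.exp (-2 * t ^ 2 / Fintype.card ι) := by
  let _ : MeasurableSpace α := ⊤
  have : DiscreteMeasurableSpace α := ⟨fun _ => trivial⟩
  set ν : Measure α := uniformOn Set.univ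
  set μ : Measure (ι → α) := Measure.pi fun _ => ν
  have hμ : μ = uniformOn Set.univ := by rw [← Set.pi_univ, uniformOn_pi]
  set Y : α → ℝ := (s : Set α).indicator 1
  set m : ℝ := #s / Fintype.card α
  have hY : ∫ a, Y a ∂ν = m := by
    rw [integral_indicator_one s.measurableSet, measureReal_def, uniformOn_univ]
    simp [m, ENNReal.toReal_div]
  have hsub : ∀ j ∈ (univ : Finset ι), HasSubgaussianMGF (fun ω : ι → α => Y (ω j) - m)
      ((‖(1 : ℝ) - 0‖₊ / 2) ^ 2) μ := by
    intro j _
    have hYsub := hasSubgaussianMGF_of_mem_Icc (μ := ν) (X := Y) (a := 0) (b := 1)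
      Measurable.of_discrete.aemeasurable (ae_of_all _ fun a => ?_)
    · have hmap : μ.map (Function.eval j) = ν := (measurePreserving_eval (fun _ => ν) j).map_eq
      rw [hY, ← hmap] at hYsub
      exact HasSubgaussianMGF.of_map (μ := μ) (Y := Function.eval j) (X := fun a => Y a - m)
        (measurable_pi_apply j).aemeasurable hYsub
    · by_cases ha : a ∈ s <;> simp [Y, ha]
  have hindep : iIndepFun (fun j (ω : ι → α) => Y (ω j) - m) μ :=
    iIndepFun_pi (X := fun _ a => Y a - m) fun _ => Measurable.of_discrete.aemeasurable
  have hHoeffding := HasSubgaussianMGF.measure_sum_ge_le_of_iIndepFun hindep hsub ht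
  have hsum : ∀ f : ι → α, ∑ j, (Y (f j) - m) = #{j | f j ∈ s} - Fintype.card ι * m := by
    intro f
    simp [Y, Finset.sum_sub_distrib, Set.indicator_apply, Finset.sum_boole]
  have hcount : μ.real {f | t ≤ ∑ j, (Y (f j) - m)} =
      #{f : ι → α | Fintype.card ι * m + t ≤ #{j | f j ∈ s}} /
        Fintype.card α ^ Fintype.card ι := by
    have hset : {f : ι → α | t ≤ ∑ j, (Y (f j) - m)} =
        ↑({f : ι → α | Fintype.card ι * m + t ≤ #{j | f j ∈ s}} : Finset (ι → α)) := by
      ext f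
      simp only [Set.mem_ofPred_eq, coe_filter, mem_univ, true_and, hsum]
      constructor <;> intro h <;> linarith
    rw [hset, hμ, measureReal_def, uniformOn_univ, Measure.count_apply_finset, ENNReal.toReal_div]
    simp
  have hc : ((∑ _j : ι, (‖(1 : ℝ) - 0‖₊ / 2) ^ 2 : NNReal) : ℝ) = Fintype.card ι / 4 := by
    simp only [sub_zero, nnnorm_one, one_div, inv_pow, sum_const, card_univ, nsmul_eq_mul,
      NNReal.coe_mul, NNReal.coe_natCast, NNReal.coe_inv, NNReal.coe_pow, NNReal.coe_ofNat]
    ring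
  rw [hcount, hc, div_le_iff₀' (by positivity)] at hHoeffding
  refine hHoeffding.trans_eq ?_
  congr 2
  ring

theorem List.length_filter_ofFn_s12 {α : Type*} {n : ℕ} (g : Fin n → α) (p : α → Bool) :
    ((List.ofFn g).filter p).length = #{j | p (g j)} := by
  induction n with
  | zero => simp
  | succ n ih =>
    rw [List.ofFn_succ, List.filter_cons, Fin.card_filter_univ_succ', ← ih]
    split <;> simp_all [add_comm]

theorem IsPFList.le_length_filter {n : ℕ} {l : List ℕ} (h : IsPFList n l) {i : ℕ} (hi : i ≤ n) :
    i ≤ (l.filter (fun x => x ≤ i)).length := by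
  rcases Nat.eq_zero_or_pos i with rfl | hi0
  · exact Nat.zero_le _
  · exact h.2.2 i hi0 hi

theorem IsPFList.exists_ofFn_eq {n : ℕ} {l : List ℕ} (h : IsPFList n l) :
    ∃ f : Fin n → Fin n, List.ofFn (fun j => (f j : ℕ) + 1) = l := by
  obtain ⟨hlen, hmem, -⟩ := h
  refine ⟨fun j => ⟨l[(j : ℕ)]'(by omega) - 1, ?_⟩,
    List.ext_getElem (by simp [hlen]) fun j _ hj => ?_⟩
  · have := hmem _ (List.getElem_mem (by omega : (j : ℕ) < l.length)); omega
  · have := hmem _ (List.getElem_mem hj)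
    simp only [List.getElem_ofFn]
    omega

theorem ncard_le_card_of_forall_isPFList {n i : ℕ} (P : ℕ → Prop) [DecidablePred P]
    {S : Set (List ℕ)} (hS : ∀ l ∈ S, IsPFList n l ∧ P (l.filter (fun x => x ≤ i)).length) :
    S.ncard ≤ #{f : Fin n → Fin n | P #{j | (f j : ℕ) < i}} := by
  set T : Finset (Fin n → Fin n) := {f | P #{j | (f j : ℕ) < i}}
  have hsub : S ⊆ (T.image fun f => List.ofFn (fun j => (f j : ℕ) + 1) : Set (List ℕ)) := by
    intro l hl
    obtain ⟨hPF, hP⟩ := hS l hl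
    obtain ⟨f, rfl⟩ := hPF.exists_ofFn_eq
    rw [List.length_filter_ofFn_s12] at hP
    refine mem_coe.2 (mem_image_of_mem _ (mem_filter.2 ⟨mem_univ f, ?_⟩))
    simpa [Nat.add_one_le_iff] using hP
  exact (Set.ncard_le_ncard hsub (finite_toSet _)).trans
    ((Set.ncard_coe_finset _).trans_le card_image_le)

theorem stmt12 (n i : ℕ) (hn : 1 ≤ n) (hi : i ≤ n) (ε : ℝ) (hε : 0 < ε) :
    (Set.ncard {l : List ℕ | IsPFList n l ∧
        |((l.filter (fun x => x ≤ i)).length : ℝ) / (n : ℝ) - (i : ℝ) / (n : ℝ)| > ε} : ℝ) /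
        ((n : ℝ) + 1) ^ (n - 1)
      ≤ 2 * (n : ℝ) * Real.exp (-2 * ε ^ 2 * n) := by
  have hn0 : (0 : ℝ) < n := by exact_mod_cast hn
  have : NeZero n := ⟨by omega⟩
  set S := {l : List ℕ | IsPFList n l ∧
    |((l.filter (fun x => x ≤ i)).length : ℝ) / (n : ℝ) - (i : ℝ) / (n : ℝ)| > ε}
  have hupper : ∀ l ∈ S,
      IsPFList n l ∧ (i : ℝ) + ε * n ≤ (l.filter (fun x => x ≤ i)).length := by
    rintro l ⟨hl, hgt⟩
    have hge : (i : ℝ) ≤ (l.filter (fun x => x ≤ i)).length := by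
      exact_mod_cast hl.le_length_filter hi
    rw [← sub_div, abs_of_nonneg (div_nonneg (by linarith) hn0.le), gt_iff_lt,
      lt_div_iff₀ hn0] at hgt
    exact ⟨hl, by linarith⟩
  have hHoeffding := card_mean_add_le_card_filter_mem_le (ι := Fin n)
    ({v | (v : ℕ) < i} : Finset (Fin n)) (mul_nonneg hε.le hn0.le)
  have hexp : -2 * (ε * n) ^ 2 / n = -2 * ε ^ 2 * n := by field_simp
  simp only [Fin.card_filter_val_lt, min_eq_right hi, Fintype.card_fin, mem_filter, mem_univ,
    true_and, mul_div_cancel₀ _ hn0.ne', hexp] at hHoeffding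
  have hpow : (n : ℝ) ^ n ≤ 2 * n * ((n : ℝ) + 1) ^ (n - 1) :=
    calc (n : ℝ) ^ n = n * (n : ℝ) ^ (n - 1) := by rw [← pow_succ', Nat.sub_add_cancel hn]
      _ ≤ 2 * n * ((n : ℝ) + 1) ^ (n - 1) := by gcongr <;> linarith
  rw [div_le_iff₀ (by positivity)]
  calc (S.ncard : ℝ) ≤ #{f : Fin n → Fin n | (i : ℝ) + ε * n ≤ #{j | (f j : ℕ) < i}} := by
        exact_mod_cast ncard_le_card_of_forall_isPFList (fun c : ℕ => (i : ℝ) + ε * n ≤ c) hupper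
    _ ≤ n ^ n * Real.exp (-2 * ε ^ 2 * n) := hHoeffding
    _ ≤ 2 * n * Real.exp (-2 * ε ^ 2 * n) * ((n : ℝ) + 1) ^ (n - 1) := by
        nlinarith [Real.exp_pos (-2 * ε ^ 2 * n)]
end

section
/- Let n ≥ 1 and let ⪯ be a partial order on {1, …, n} that is a disjoint union of chains, i.e., the comparability relation (i ∼ j iff i ⪯ j or j ⪯ i) is an equivalence relation. Call a function g from {1,…,n} to a linearly ordered set P-monotone if i ≺ j implies g(i) < g(j). Then #{ f : {1,…,n} → {1,…,n+1} : f is P-monotone } = (n+1) · #{ π ∈ PF_n : π is P-monotone }, where π ∈ PF_n is viewed as a function {1,…,n} → {1,…,n+1} taking values in {1,…,n}. Equivalently, the probability of being P-monotone is the same for a uniformly random parking function of size n and for a uniformly random function from {1,…,n} to {1,…,n+1}. -/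
/-- A parking function of size `n`, encoded as a function `Fin n → ℕ` with values in
`{1, …, n}` such that for each `1 ≤ i ≤ n` at least `i` entries are `≤ i`. -/
def IsPFFun (n : ℕ) (π : Fin n → ℕ) : Prop :=
  (∀ k, 1 ≤ π k ∧ π k ≤ n) ∧
  ∀ i : ℕ, 1 ≤ i → i ≤ n → i ≤ (Finset.univ.filter (fun k => π k ≤ i)).card

/-!
Pollak's argument, made compatible with the chains. The cyclic group `ℤ/(n+1)` acts on
P-monotone maps `f : Fin n → {1, …, n+1}`: add `c` to every value modulo `n+1`, then re-sort the
values on each chain increasingly along the chain. On every chain the multiset of values is just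
rotated, so the number of entries `≤ i` is the same as for the plain rotation of `f`, and by the
cycle lemma exactly one of the `n+1` rotations of `f` is a parking function. Hence every orbit
has `n+1` elements, exactly one of them a parking function.
-/

open Finset

theorem existsUnique_lt_forall_le_add_s18 {s : ℕ → ℤ} {p : ℕ} (hp : 0 < p)
    (hs : ∀ m, s (m + p) = s m - 1) :
    ∃! a, a < p ∧ ∀ i < p, s a ≤ s (a + i) := by
  have no_two : ∀ a b, a < b → b < p → (∀ i < p, s a ≤ s (a + i)) →
      ¬ ∀ i < p, s b ≤ s (b + i) := by
    intro a b hab hb ha hb'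
    have h₁ := ha (b - a) (by omega)
    have h₂ := hb' (a + p - b) (by omega)
    rw [Nat.add_sub_cancel' hab.le] at h₁
    rw [Nat.add_sub_cancel' (by omega), hs] at h₂
    omega
  obtain ⟨b, hb, hbmin⟩ := (range p).exists_min_image s ⟨0, mem_range.2 hp⟩
  have hex : ∃ a, a < p ∧ ∀ j < p, s a ≤ s j :=
    ⟨b, mem_range.1 hb, fun j hj => hbmin j (mem_range.2 hj)⟩
  obtain ⟨hap, hamin⟩ := Nat.find_spec hex
  set a := Nat.find hex
  have hagood : ∀ i < p, s a ≤ s (a + i) := by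
    intro i hi
    rcases lt_or_ge (a + i) p with h | h
    · exact hamin _ h
    -- `a + i - p` precedes the first minimiser `a`, so its value exceeds `s a`
    obtain ⟨j, hj, hjm⟩ : ∃ j < p, s j < s (a + i - p) := by
      have := Nat.find_min hex (show a + i - p < a by omega)
      push Not at this
      exact this (by omega)
    have := hs (a + i - p)
    rw [Nat.sub_add_cancel h] at this
    linarith [hamin j hj]
  refine ⟨a, ⟨hap, hagood⟩, fun b ⟨hb, hbgood⟩ => ?_⟩
  rcases lt_trichotomy b a with h | h | h
  · exact absurd hagood (no_two b a h hap hbgood)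
  · exact h
  · exact absurd hbgood (no_two a b h hb hagood)

lemma Nat.add_mod_eq_iff_mod_eq {p x a c t : ℕ} (hac : (a + c) % p = 0) (ht : t < p) :
    (x + c) % p = t ↔ x % p = (a + t) % p := by
  have hac' : (a : ZMod p) + c = 0 := by
    rw [← Nat.cast_add, ZMod.natCast_eq_zero_iff]; exact Nat.dvd_of_mod_eq_zero hac
  conv_lhs => rw [← Nat.mod_eq_of_lt ht]
  rw [← ZMod.natCast_eq_natCast_iff', ← ZMod.natCast_eq_natCast_iff']
  push_cast
  constructor <;> intro h
  · linear_combination h - hac'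
  · linear_combination h + hac'

section Pollak

variable {α : Type*} [Fintype α] (p : ℕ) (g : α → ℕ)

def prefixCount (m : ℕ) : ℕ := ∑ j ∈ range m, #{k | g k % p = j % p}

lemma prefixCount_add_period (hp : 0 < p) (m : ℕ) :
    prefixCount p g (m + p) = prefixCount p g m + Fintype.card α := by
  induction m with
  | zero =>
    rw [zero_add, prefixCount, prefixCount, range_zero, sum_empty, zero_add, ← card_univ,
      card_eq_sum_card_fiberwise (f := fun k => g k % p) (t := range p)
        (fun k _ => mem_range.2 (Nat.mod_lt _ hp))]
    exact sum_congr rfl fun j hj => by rw [Nat.mod_eq_of_lt (mem_range.1 hj)]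
  | succ m ih =>
    rw [show m + 1 + p = m + p + 1 by omega, prefixCount, sum_range_succ, ← prefixCount, ih,
      Nat.add_mod_right, prefixCount, prefixCount, sum_range_succ]
    ring

variable {p} in
lemma card_filter_add_mod_lt {a c i : ℕ} (hac : (a + c) % p = 0) (hi : i ≤ p) :
    #{k | (g k + c) % p < i} + prefixCount p g a = prefixCount p g (a + i) := by
  rw [prefixCount, prefixCount, sum_range_add, add_comm,
    card_eq_sum_card_fiberwise (f := fun k => (g k + c) % p) (t := range i)
      (fun k hk => mem_range.2 (mem_filter.1 hk).2)]
  refine congrArg _ (sum_congr rfl fun t ht => congrArg card ?_)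
  have hti := mem_range.1 ht
  ext k
  simp only [mem_filter, mem_univ, true_and, ← Nat.add_mod_eq_iff_mod_eq hac (hti.trans_le hi)]
  exact ⟨And.right, fun h => ⟨h ▸ hti, h⟩⟩

variable {p g} in
lemma le_card_filter_add_mod_lt_iff {a c i : ℕ} (hac : (a + c) % p = 0) (hi : i ≤ p) :
    i ≤ #{k | (g k + c) % p < i} ↔
      (prefixCount p g a : ℤ) - a ≤ (prefixCount p g (a + i) : ℤ) - (a + i : ℕ) := by
  rw [← card_filter_add_mod_lt g hac hi]
  push_cast
  omega

/-- Pollak's cycle lemma: exactly one rotation of `n` cars on `n + 1` spots parks. -/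
theorem existsUnique_parking_shift :
    ∃! c : Fin (Fintype.card α + 1), ∀ i, 1 ≤ i → i ≤ Fintype.card α →
      i ≤ #{k | (g k + c) % (Fintype.card α + 1) < i} := by
  set p := Fintype.card α + 1
  -- cars minus spots among the first `m` spots of the circle unrolled to `ℕ`
  set s : ℕ → ℤ := fun m => (prefixCount p g m : ℤ) - m
  have hs : ∀ m, s (m + p) = s m - 1 := fun m => by
    simp only [s, p, prefixCount_add_period _ g (Nat.succ_pos _)]
    push_cast; ring
  have hpark : ∀ c : Fin p, (∀ i, 1 ≤ i → i ≤ Fintype.card α →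
      i ≤ #{k | (g k + c) % p < i}) ↔ ∀ i < p, s (-c).val ≤ s ((-c).val + i) := by
    intro c
    have hac : ((-c).val + c.val) % p = 0 := by rw [← Fin.val_add, neg_add_cancel, Fin.val_zero]
    refine ⟨fun h i hi => ?_, fun h i hi₁ hi => ?_⟩
    · rcases Nat.eq_zero_or_pos i with rfl | hi₀
      · rfl
      · exact (le_card_filter_add_mod_lt_iff hac hi.le).1 (h i hi₀ (by omega))
    · exact (le_card_filter_add_mod_lt_iff hac (by omega)).2 (h i (by omega))
  obtain ⟨a, ⟨ha, hgood⟩, huniq⟩ := existsUnique_lt_forall_le_add_s18 (by omega : 0 < p) hs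
  refine ⟨-⟨a, ha⟩, (hpark _).2 (by rw [neg_neg]; exact hgood), fun c hc => ?_⟩
  exact neg_eq_iff_eq_neg.1 (Fin.ext (huniq _ ⟨(-c).isLt, (hpark c).1 hc⟩))

end Pollak

lemma Nat.nth_mem_finset {S : Finset ℕ} {i : ℕ} (hi : i < #S) : Nat.nth (· ∈ S) i ∈ S :=
  Nat.nth_mem (p := (· ∈ S)) i fun _ => by simpa

lemma Nat.nth_lt_nth_finset {S : Finset ℕ} {i j : ℕ} (hij : i < j) (hj : j < #S) :
    Nat.nth (· ∈ S) i < Nat.nth (· ∈ S) j :=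
  Nat.nth_lt_nth' hij fun _ => by simpa

lemma Nat.count_mem_finset (S : Finset ℕ) (x : ℕ) : Nat.count (· ∈ S) x = #{y ∈ S | y < x} := by
  rw [Nat.count_eq_card_filter_range]
  congr 1
  ext y
  simp [and_comm]

section Chains

variable {α : Type*} (r : α → α → Prop)

def IsPMonotone {β : Type*} [LT β] (f : α → β) : Prop := ∀ i j, r i j → i ≠ j → f i < f j

def IsChainUnion : Prop := ∀ i j k, (r i j ∨ r j i) → (r j k ∨ r k j) → r i k ∨ r k i

variable [Fintype α] [DecidableRel r]

def chainOf (k : α) : Finset α := {j | r k j ∨ r j k}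

def chainRank (k : α) : ℕ := #{j | r j k ∧ ¬ r k j}

/-- The values of `h` on each chain, re-sorted increasingly along the chain. -/
noncomputable def chainSort (h : α → ℕ) (k : α) : ℕ :=
  Nat.nth (· ∈ (chainOf r k).image h) (chainRank r k)

variable {r}

@[simp]
lemma mem_chainOf {j k : α} : j ∈ chainOf r k ↔ r k j ∨ r j k := by
  simp [chainOf]

lemma self_mem_chainOf [Std.Refl r] (k : α) : k ∈ chainOf r k :=
  mem_chainOf.2 (Or.inl (refl k))

lemma chainOf_eq_of_mem (hr : IsChainUnion r) {j k : α} (hj : j ∈ chainOf r k) :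
    chainOf r j = chainOf r k := by
  ext i
  simp only [mem_chainOf] at hj ⊢
  exact ⟨fun h => hr _ _ _ hj h, fun h => hr _ _ _ hj.symm h⟩

lemma comparable_of_mem_chainOf (hr : IsChainUnion r) {j j' k : α} (hj : j ∈ chainOf r k)
    (hj' : j' ∈ chainOf r k) : r j j' ∨ r j' j :=
  hr _ _ _ (mem_chainOf.1 hj).symm (mem_chainOf.1 hj')

lemma chainRank_lt_card [Std.Refl r] (k : α) : chainRank r k < #(chainOf r k) := by
  classical
  refine (card_le_card fun j hj => ?_).trans_lt (card_erase_lt_of_mem (self_mem_chainOf k))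
  simp only [mem_filter, mem_univ, true_and] at hj
  exact mem_erase.2 ⟨by rintro rfl; exact hj.2 hj.1, mem_chainOf.2 (Or.inr hj.1)⟩

lemma chainRank_lt_chainRank [IsPreorder α r] {i j : α} (hij : r i j) (hji : ¬ r j i) :
    chainRank r i < chainRank r j := by
  classical
  have hsub : insert i (univ.filter fun j' => r j' i ∧ ¬ r i j') ⊆
      univ.filter fun j' => r j' j ∧ ¬ r j j' := by
    intro j' hj'
    simp only [mem_insert, mem_filter, mem_univ, true_and] at hj' ⊢
    rcases hj' with rfl | ⟨h, h'⟩
    · exact ⟨hij, hji⟩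
    · exact ⟨_root_.trans h hij, fun h'' => h' (_root_.trans hij h'')⟩
  have := card_le_card hsub
  rw [card_insert_of_notMem (by simp [refl i])] at this
  exact this

lemma IsPMonotone.injOn {β : Type*} [Preorder β] (hr : IsChainUnion r) {f : α → β}
    (hf : IsPMonotone r f) (k : α) : Set.InjOn f (chainOf r k) := by
  intro j hj j' hj' hjj'
  by_contra hne
  rcases comparable_of_mem_chainOf hr hj hj' with h | h
  · exact (hf _ _ h hne).ne hjj'
  · exact (hf _ _ h (Ne.symm hne)).ne hjj'.symm

lemma sum_comp_eq_of_image_chainOf_eq [Std.Refl r] {β M : Type*} [DecidableEq β]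
    [AddCommMonoid M] (hr : IsChainUnion r) {u v : α → β}
    (hu : ∀ k, Set.InjOn u (chainOf r k)) (hv : ∀ k, Set.InjOn v (chainOf r k))
    (huv : ∀ k, (chainOf r k).image u = (chainOf r k).image v) (F : β → M) :
    ∑ k, F (u k) = ∑ k, F (v k) := by
  let S : Setoid α := ⟨fun i j => r i j ∨ r j i, ⟨fun i => Or.inl (refl i), Or.symm, hr _ _ _⟩⟩
  classical
  rw [sum_partition S, sum_partition S]
  refine sum_congr rfl fun t ht => ?_
  obtain ⟨k, -, rfl⟩ := mem_image.1 ht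
  have hclass : ({i | ⟦i⟧ = (⟦k⟧ : Quotient S)} : Finset α) = chainOf r k := by
    ext i
    simp only [mem_filter, mem_univ, true_and, Quotient.eq, mem_chainOf]
    exact Or.comm
  rw [hclass, ← sum_image (hu k), ← sum_image (hv k), huv]

variable {h : α → ℕ}

lemma chainSort_mem_image [Std.Refl r] (hh : ∀ k, Set.InjOn h (chainOf r k)) (k : α) :
    chainSort r h k ∈ (chainOf r k).image h :=
  Nat.nth_mem_finset (by rw [card_image_of_injOn (hh k)]; exact chainRank_lt_card k)

lemma isPMonotone_chainSort [IsPartialOrder α r] (hr : IsChainUnion r)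
    (hh : ∀ k, Set.InjOn h (chainOf r k)) : IsPMonotone r (chainSort r h) := by
  intro i j hij hne
  have hc : chainOf r j = chainOf r i := chainOf_eq_of_mem hr (mem_chainOf.2 (Or.inl hij))
  rw [chainSort, chainSort, hc]
  refine Nat.nth_lt_nth_finset (chainRank_lt_chainRank hij fun hji => hne (antisymm hij hji)) ?_
  rw [card_image_of_injOn (hh i), ← hc]
  exact chainRank_lt_card j

lemma image_chainSort [IsPartialOrder α r] (hr : IsChainUnion r)
    (hh : ∀ k, Set.InjOn h (chainOf r k)) (k : α) :
    (chainOf r k).image (chainSort r h) = (chainOf r k).image h := by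
  refine eq_of_subset_of_card_le (fun x hx => ?_) ?_
  · obtain ⟨j, hj, rfl⟩ := mem_image.1 hx
    rw [← chainOf_eq_of_mem hr hj]
    exact chainSort_mem_image hh j
  · rw [card_image_of_injOn (hh k), card_image_of_injOn ((isPMonotone_chainSort hr hh).injOn hr k)]

lemma chainSort_eq_self [IsPartialOrder α r] (hr : IsChainUnion r) {f : α → ℕ}
    (hf : IsPMonotone r f) : chainSort r f = f := by
  funext k
  have hpred :
      (chainOf r k).filter (fun j => f j < f k) = univ.filter fun j => r j k ∧ ¬ r k j := by
    ext j
    simp only [mem_filter, mem_univ, true_and, mem_chainOf]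
    constructor
    · rintro ⟨hjk | hjk, hlt⟩
      · obtain rfl | hne := eq_or_ne k j
        · exact absurd hlt (lt_irrefl _)
        · exact absurd (hf _ _ hjk hne) (lt_asymm hlt)
      · exact ⟨hjk, fun hkj => by rw [antisymm hjk hkj] at hlt; exact lt_irrefl _ hlt⟩
    · rintro ⟨hjk, hkj⟩
      exact ⟨Or.inr hjk, hf _ _ hjk (by rintro rfl; exact hkj hjk)⟩
  have hcount : Nat.count (· ∈ (chainOf r k).image f) (f k) = chainRank r k := by
    rw [Nat.count_mem_finset, filter_image,
      card_image_of_injOn ((hf.injOn hr k).mono (filter_subset _ _)), hpred]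
    rfl
  rw [chainSort, ← hcount, Nat.nth_count (mem_image_of_mem f (self_mem_chainOf k))]

lemma chainSort_comp_chainSort [IsPartialOrder α r] (hr : IsChainUnion r)
    (hh : ∀ k, Set.InjOn h (chainOf r k)) (u : ℕ → ℕ) :
    chainSort r (u ∘ chainSort r h) = chainSort r (u ∘ h) := by
  funext k
  rw [chainSort, chainSort, ← image_image, image_chainSort hr hh, image_image]

lemma sum_chainSort [IsPartialOrder α r] {M : Type*} [AddCommMonoid M] (hr : IsChainUnion r)
    (hh : ∀ k, Set.InjOn h (chainOf r k)) (F : ℕ → M) :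
    ∑ k, F (chainSort r h k) = ∑ k, F (h k) :=
  sum_comp_eq_of_image_chainOf_eq hr (fun k => (isPMonotone_chainSort hr hh).injOn hr k) hh
    (image_chainSort hr hh) F

end Chains

def cyclicShift (N : ℕ) (c : Fin (N + 1)) (x : ℕ) : ℕ := (x - 1 + c) % (N + 1) + 1

section CyclicShift

variable {N : ℕ}

lemma one_le_cyclicShift (c : Fin (N + 1)) (x : ℕ) : 1 ≤ cyclicShift N c x :=
  Nat.le_add_left _ _

lemma cyclicShift_le (c : Fin (N + 1)) (x : ℕ) : cyclicShift N c x ≤ N + 1 :=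
  Nat.mod_lt _ N.succ_pos

lemma cyclicShift_le_iff {c : Fin (N + 1)} {x i : ℕ} :
    cyclicShift N c x ≤ i ↔ (x - 1 + c) % (N + 1) < i := by
  rw [cyclicShift]; omega

lemma cyclicShift_zero {x : ℕ} (h₁ : 1 ≤ x) (h₂ : x ≤ N + 1) : cyclicShift N 0 x = x := by
  rw [cyclicShift, Fin.val_zero, add_zero, Nat.mod_eq_of_lt (by omega)]
  omega

lemma cyclicShift_cyclicShift (c d : Fin (N + 1)) (x : ℕ) :
    cyclicShift N d (cyclicShift N c x) = cyclicShift N (c + d) x := by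
  simp only [cyclicShift, Nat.add_sub_cancel, Fin.val_add, Nat.mod_add_mod, Nat.add_mod_mod,
    add_assoc]

lemma cyclicShift_injOn (c : Fin (N + 1)) : Set.InjOn (cyclicShift N c) (Set.Icc 1 (N + 1)) := by
  intro x hx y hy hxy
  simp only [Set.mem_Icc] at hx hy
  have h : (x - 1) % (N + 1) = (y - 1) % (N + 1) :=
    Nat.ModEq.add_right_cancel' (c : ℕ) (Nat.add_right_cancel hxy)
  rw [Nat.mod_eq_of_lt (by omega), Nat.mod_eq_of_lt (by omega)] at h
  omega

end CyclicShift

section ShiftSort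

variable {α : Type*} [Fintype α] (r : α → α → Prop) (N : ℕ)

def pMonotoneMaps : Set (α → ℕ) := {f | (∀ i, 1 ≤ f i ∧ f i ≤ N + 1) ∧ IsPMonotone r f}

variable [DecidableRel r]

noncomputable def shiftSort (c : Fin (N + 1)) (f : α → ℕ) : α → ℕ :=
  chainSort r (cyclicShift N c ∘ f)

variable {r N} {f : α → ℕ}

lemma injOn_cyclicShift_comp (hr : IsChainUnion r) (hf : f ∈ pMonotoneMaps r N)
    (c : Fin (N + 1)) (k : α) : Set.InjOn (cyclicShift N c ∘ f) (chainOf r k) :=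
  (cyclicShift_injOn c).comp (hf.2.injOn hr k) fun j _ => hf.1 j

variable [IsPartialOrder α r]

lemma shiftSort_mem (hr : IsChainUnion r) (hf : f ∈ pMonotoneMaps r N) (c : Fin (N + 1)) :
    shiftSort r N c f ∈ pMonotoneMaps r N := by
  refine ⟨fun k => ?_, isPMonotone_chainSort hr (injOn_cyclicShift_comp hr hf c)⟩
  obtain ⟨j, -, hj⟩ := mem_image.1 (chainSort_mem_image (injOn_cyclicShift_comp hr hf c) k)
  rw [shiftSort, ← hj]
  exact ⟨one_le_cyclicShift _ _, cyclicShift_le _ _⟩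

lemma shiftSort_zero (hr : IsChainUnion r) (hf : f ∈ pMonotoneMaps r N) :
    shiftSort r N 0 f = f := by
  have : cyclicShift N 0 ∘ f = f := funext fun k => cyclicShift_zero (hf.1 k).1 (hf.1 k).2
  rw [shiftSort, this, chainSort_eq_self hr hf.2]

lemma shiftSort_shiftSort (hr : IsChainUnion r) (hf : f ∈ pMonotoneMaps r N)
    (c d : Fin (N + 1)) : shiftSort r N d (shiftSort r N c f) = shiftSort r N (c + d) f := by
  rw [shiftSort, shiftSort, chainSort_comp_chainSort hr (injOn_cyclicShift_comp hr hf c)]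
  congr 1
  funext k
  exact cyclicShift_cyclicShift c d (f k)

lemma card_filter_shiftSort_le (hr : IsChainUnion r) (hf : f ∈ pMonotoneMaps r N) (c : Fin (N + 1))
    (i : ℕ) : #{k | shiftSort r N c f k ≤ i} = #{k | (f k - 1 + c) % (N + 1) < i} := by
  rw [card_filter, card_filter, shiftSort,
    sum_chainSort hr (injOn_cyclicShift_comp hr hf c) fun x => if x ≤ i then 1 else 0]
  simp only [Function.comp, cyclicShift_le_iff]

end ShiftSort

section ParkingFunctions

variable {n : ℕ}

lemma isPFFun_iff {π : Fin n → ℕ} (hπ : ∀ k, 1 ≤ π k ∧ π k ≤ n + 1) :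
    IsPFFun n π ↔ ∀ i, 1 ≤ i → i ≤ n → i ≤ #{k | π k ≤ i} := by
  refine ⟨And.right, fun h => ⟨fun k => ⟨(hπ k).1, not_lt.1 fun hk => ?_⟩, h⟩⟩
  have hsub : ({k' | π k' ≤ n} : Finset (Fin n)) ⊆ univ.erase k :=
    fun k' hk' => mem_erase.2 ⟨by rintro rfl; simp at hk'; omega, mem_univ _⟩
  have := (h n k.pos (le_refl n)).trans (card_le_card hsub)
  rw [card_erase_of_mem (mem_univ k), card_univ, Fintype.card_fin] at this
  have := k.pos
  omega

variable (r : Fin n → Fin n → Prop)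

def pMonotonePFs : Set (Fin n → ℕ) := {π | IsPFFun n π ∧ IsPMonotone r π}

variable {r}

lemma pMonotonePFs_subset : pMonotonePFs r ⊆ pMonotoneMaps r n :=
  fun _ hπ => ⟨fun k => ⟨(hπ.1.1 k).1, (hπ.1.1 k).2.trans n.le_succ⟩, hπ.2⟩

variable [DecidableRel r] [IsPartialOrder (Fin n) r]

lemma existsUnique_isPFFun_shiftSort (hr : IsChainUnion r) {f : Fin n → ℕ}
    (hf : f ∈ pMonotoneMaps r n) : ∃! c : Fin (n + 1), IsPFFun n (shiftSort r n c f) := by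
  have := existsUnique_parking_shift fun k => f k - 1
  rw [Fintype.card_fin] at this
  simpa only [isPFFun_iff (shiftSort_mem hr hf _).1, card_filter_shiftSort_le hr hf] using this

theorem bijective_shiftSort (hr : IsChainUnion r) :
    Function.Bijective fun x : Fin (n + 1) × pMonotonePFs r =>
      (⟨shiftSort r n x.1 x.2, shiftSort_mem hr (pMonotonePFs_subset x.2.2) x.1⟩ :
        pMonotoneMaps r n) := by
  have shiftSort_neg : ∀ c, ∀ π ∈ pMonotonePFs r, shiftSort r n (-c) (shiftSort r n c π) = π :=
    fun c π hπ => by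
      rw [shiftSort_shiftSort hr (pMonotonePFs_subset hπ), add_neg_cancel,
        shiftSort_zero hr (pMonotonePFs_subset hπ)]
  constructor
  · rintro ⟨c, π, hπ⟩ ⟨c', π', hπ'⟩ h
    simp only [Subtype.mk.injEq] at h
    have hc : c = c' := neg_injective <|
      (existsUnique_isPFFun_shiftSort hr (shiftSort_mem hr (pMonotonePFs_subset hπ) c)).unique
        (by rw [shiftSort_neg c π hπ]; exact hπ.1) (by rw [h, shiftSort_neg c' π' hπ']; exact hπ'.1)
    subst hc
    have hπ : π = π' := by rw [← shiftSort_neg c π hπ, h, shiftSort_neg c π' hπ']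
    subst hπ
    rfl
  · rintro ⟨f, hf⟩
    obtain ⟨c, hc, -⟩ := existsUnique_isPFFun_shiftSort hr hf
    refine ⟨(-c, ⟨shiftSort r n c f, hc, (shiftSort_mem hr hf c).2⟩), Subtype.ext ?_⟩
    dsimp only
    rw [shiftSort_shiftSort hr hf, add_neg_cancel, shiftSort_zero hr hf]

end ParkingFunctions

theorem stmt18_general (n : ℕ) (r : Fin n → Fin n → Prop)
    (hpo : IsPartialOrder (Fin n) r)
    -- the comparability relation is transitive (hence an equivalence relation),
    -- i.e. the poset is a disjoint union of chains
    (hchain : ∀ i j k : Fin n, (r i j ∨ r j i) → (r j k ∨ r k j) → (r i k ∨ r k i)) :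
    Set.ncard {f : Fin n → ℕ | (∀ i, 1 ≤ f i ∧ f i ≤ n + 1) ∧
        ∀ i j : Fin n, r i j → i ≠ j → f i < f j}
      = (n + 1) *
        Set.ncard {π : Fin n → ℕ | IsPFFun n π ∧
          ∀ i j : Fin n, r i j → i ≠ j → π i < π j} := by
  classical
  change (pMonotoneMaps r n).ncard = (n + 1) * (pMonotonePFs r).ncard
  rw [← Nat.card_coe_set_eq, ← Nat.card_coe_set_eq,
    ← Nat.card_eq_of_bijective _ (bijective_shiftSort hchain), Nat.card_prod,
    Nat.card_eq_fintype_card (α := Fin (n + 1)), Fintype.card_fin]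

theorem stmt18 (n : ℕ) (hn : 1 ≤ n) (r : Fin n → Fin n → Prop)
    (hpo : IsPartialOrder (Fin n) r)
    -- the comparability relation is transitive (hence an equivalence relation),
    -- i.e. the poset is a disjoint union of chains
    (hchain : ∀ i j k : Fin n, (r i j ∨ r j i) → (r j k ∨ r k j) → (r i k ∨ r k i)) :
    Set.ncard {f : Fin n → ℕ | (∀ i, 1 ≤ f i ∧ f i ≤ n + 1) ∧
        ∀ i j : Fin n, r i j → i ≠ j → f i < f j}
      = (n + 1) *
        Set.ncard {π : Fin n → ℕ | IsPFFun n π ∧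
          ∀ i j : Fin n, r i j → i ≠ j → π i < π j} :=
  stmt18_general n r hpo hchain
end
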